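/- arXiv:2209.04894 — 6 statements merged into one kernel-verified Lean document; each statement's English description precedes it below -/
import Mathlib

section
/- For every ε > 0 there exists n₀ such that every T_2-free partially directed 2-graph H on n ≥ n₀ vertices satisfies e_u(H) + 2·e_d(H) ≤ (1+ε)·C(n,2), where C(n,2) is the binomial coefficient 'n choose 2'. (In other words, π(T_2, 2) = 1.) -/
section Defs

variable {V W : Type*}

/-- A clause is a finite set of literals; a literal is a variable paired with a polarity
(`true` = positive, `false` = negative). -/
abbrev SatClause (V : Type*) := Finset (V × Bool)

/-- A formula is a finite set of clauses. -/
abbrev SatFormula (V : Type*) := Finset (SatClause V)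

/-- The set of variables used by a clause. -/
def clauseVars [DecidableEq V] (C : SatClause V) : Finset V := C.image Prod.fst

/-- A valid `k`-SAT clause: `k` literals on `k` distinct variables. -/
def IsKClause [DecidableEq V] (k : ℕ) (C : SatClause V) : Prop :=
  C.card = k ∧ (clauseVars C).card = k

/-- A valid `k`-SAT formula. -/
def IsKFormula [DecidableEq V] (k : ℕ) (G : SatFormula V) : Prop :=
  ∀ C ∈ G, IsKClause k C

/-- An assignment satisfies a clause if it makes all of its literals true. -/
def SatisfiesClause (a : V → Bool) (C : SatClause V) : Prop := ∀ l ∈ C, a l.1 = l.2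

/-- A formula is minimal if every clause has a witness assignment satisfying it and no other
clause. -/
def MinimalFormula (G : SatFormula V) : Prop :=
  ∀ C ∈ G, ∃ w : V → Bool, SatisfiesClause w C ∧ ∀ C' ∈ G, SatisfiesClause w C' → C' = C

/-- A formula is simple if no two distinct clauses use the same set of variables. -/
def SimpleFormula [DecidableEq V] (G : SatFormula V) : Prop :=
  ∀ C ∈ G, ∀ C' ∈ G, clauseVars C = clauseVars C' → C = C'

/-- A formula is unate if every variable occurs with only one polarity. -/
def UnateFormula (G : SatFormula V) : Prop :=
  ∀ x : V, ¬ ((∃ C ∈ G, (x, true) ∈ C) ∧ (∃ C ∈ G, (x, false) ∈ C))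

/-- The set of variables used by a formula. -/
def formulaVars [DecidableEq V] (G : SatFormula V) : Finset V := G.biUnion clauseVars

/-- `f` is a `k`-SAT function: it is computed by some `k`-SAT formula (value `1` iff some
clause has all its literals satisfied). -/
def IsKSatFunction (k n : ℕ) (f : (Fin n → Bool) → Bool) : Prop :=
  ∃ G : SatFormula (Fin n), IsKFormula k G ∧
    ∀ a : Fin n → Bool, f a = true ↔ ∃ C ∈ G, SatisfiesClause a C

/-- Relabel the variables of a formula along `φ`. -/
def mapFormula [DecidableEq V] [DecidableEq W] (φ : W → V) (F : SatFormula W) : SatFormula V :=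
  F.image (fun C => C.image (fun l => (φ l.1, l.2)))

/-- `G'` is a copy of `F`: it is obtained from `F` by an injective relabeling of variables. -/
def IsCopyOf [DecidableEq V] [DecidableEq W] (F : SatFormula W) (G' : SatFormula V) : Prop :=
  ∃ φ : W → V, Set.InjOn φ ↑(formulaVars F) ∧ G' = mapFormula φ F

/-- The number of copies of `F` in `G`, i.e. of subformulae of `G` isomorphic to `F`. -/
noncomputable def copyCount [DecidableEq V] [DecidableEq W] (F : SatFormula W)
    (G : SatFormula V) : ℕ :=
  Set.ncard {G' : SatFormula V | G' ⊆ G ∧ IsCopyOf F G'}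

/-- The `b`-blowup of a clause: replace each literal by the literal of the same polarity on
one of the `b` duplicates of its variable, in all possible ways. -/
def clauseBlowup [DecidableEq V] (b : ℕ) (C : SatClause V) :
    Finset (SatClause (V × Fin b)) :=
  (C.pi (fun _ => (Finset.univ : Finset (Fin b)))).image
    (fun g => C.attach.image (fun l => ((l.1.1, g l.1 l.2), l.1.2)))

/-- The `b`-blowup of a formula. -/
def formulaBlowup [DecidableEq V] (b : ℕ) (G : SatFormula V) : SatFormula (V × Fin b) :=
  G.biUnion (clauseBlowup b)

/-- The weight of a formula on `n` variables:
`wt(G) = Σ_i log₂(i+1)·α_i(G)` where `α_i(G)·C(n,k)` counts the `k`-sets of variables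
supporting exactly `i` clauses. -/
noncomputable def formulaWt (k n : ℕ) (G : SatFormula (Fin n)) : ℝ :=
  (∑ S ∈ (Finset.univ : Finset (Fin n)).powersetCard k,
    Real.logb 2 (((G.filter (fun C => clauseVars C = S)).card : ℝ) + 1)) / (n.choose k)

/-- A partially directed graph: a set of undirected edges together with a set of directed
(pointed) edges. -/
structure PDG (V : Type*) where
  undir : Finset (Finset V)
  dir : Finset (Finset V × V)

/-- `H` is a valid `k`-PDG: all edges have `k` vertices, each directed edge is pointed at one
of its vertices, and each `k`-set carries at most one edge (undirected or directed). -/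
def PDG.IsValid (k : ℕ) (H : PDG V) : Prop :=
  (∀ e ∈ H.undir, e.card = k) ∧
  (∀ p ∈ H.dir, p.1.card = k ∧ p.2 ∈ p.1) ∧
  (∀ p ∈ H.dir, p.1 ∉ H.undir) ∧
  (∀ p ∈ H.dir, ∀ q ∈ H.dir, p.1 = q.1 → p = q)

/-- `F` is a subgraph of `H`: a copy of `F` can be obtained from `H` by deleting vertices,
deleting edges, and/or forgetting directions of edges. -/
def PDG.IsSubgraph [DecidableEq V] (F : PDG W) (H : PDG V) : Prop :=
  ∃ φ : W → V, Function.Injective φ ∧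
    (∀ e ∈ F.undir, e.image φ ∈ H.undir ∨ ∃ v, (e.image φ, v) ∈ H.dir) ∧
    (∀ p ∈ F.dir, (p.1.image φ, φ p.2) ∈ H.dir)

/-- The image of a PDG under a relabeling of vertices. -/
def PDG.map [DecidableEq V] (φ : W → V) (F : PDG W) : PDG V :=
  ⟨F.undir.image (Finset.image φ), F.dir.image (fun p => (p.1.image φ, φ p.2))⟩

/-- The PDG `T_k` on vertex set `{0, …, k}` (0-indexed): undirected edges everything-but-`k`
and everything-but-`k-2`, and the edge everything-but-`k-1` directed toward `k`. -/
def TkPDG (k : ℕ) : PDG (Fin (k + 1)) where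
  undir := { Finset.univ.erase ⟨k, Nat.lt_succ_self k⟩,
             Finset.univ.erase ⟨k - 2, by omega⟩ }
  dir := { (Finset.univ.erase ⟨k - 1, by omega⟩, ⟨k, Nat.lt_succ_self k⟩) }

/-- A semisimple formula: every `k`-set of variables supports at most one clause, or exactly
two clauses whose polarities differ on exactly one variable. -/
def SemisimpleFormula [DecidableEq V] (G : SatFormula V) : Prop :=
  ∀ C₁ ∈ G, ∀ C₂ ∈ G, C₁ ≠ C₂ → clauseVars C₁ = clauseVars C₂ →
    (((C₁ \ C₂).image Prod.fst).card = 1 ∧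
      ∀ C₃ ∈ G, clauseVars C₃ = clauseVars C₁ → C₃ = C₁ ∨ C₃ = C₂)

/-- The type of a (semisimple) formula: an undirected edge on each variable set supporting
exactly one clause, and for each variable set supporting two clauses a directed edge pointed
at the variable where the two clauses differ. -/
def formulaType [DecidableEq V] (G : SatFormula V) : PDG V where
  undir := (G.filter (fun C => ∀ C' ∈ G, clauseVars C' = clauseVars C → C' = C)).image
    clauseVars
  dir := ((G ×ˢ G).filter (fun p => p.1 ≠ p.2 ∧ clauseVars p.1 = clauseVars p.2)).biUnion
    (fun p => ((p.1 \ p.2).image Prod.fst).image (fun v => (clauseVars p.1, v)))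

end Defs

section AuxProof

open Finset


variable {n : ℕ}

/-- the "other" endpoint of a 2-set -/
def oth (v : Fin n) (e : Finset (Fin n)) : Fin n :=
  if h : (e.erase v).Nonempty then (e.erase v).min' h else v

lemma oth_spec {v : Fin n} {e : Finset (Fin n)} (hc : e.card = 2) (hv : v ∈ e) :
    oth v e ≠ v ∧ e = {v, oth v e} := by
  have h1 : (e.erase v).card = 1 := by
    rw [Finset.card_erase_of_mem hv, hc]
  have hne : (e.erase v).Nonempty := by
    rw [← Finset.card_pos, h1]; norm_num
  have hmem : oth v e ∈ e.erase v := by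
    rw [oth, dif_pos hne]; exact Finset.min'_mem _ _
  have hne' : oth v e ≠ v := (Finset.mem_erase.1 hmem).1
  refine ⟨hne', ?_⟩
  refine (Finset.eq_of_subset_of_card_le ?_ ?_).symm
  · intro x hx
    rcases Finset.mem_insert.1 hx with h | h
    · exact h ▸ hv
    · exact (Finset.mem_erase.1 (Finset.mem_singleton.1 h ▸ hmem)).2
  · rw [hc, Finset.card_insert_of_notMem (by simp [Ne.symm hne']),
      Finset.card_singleton]

/-- degree of a vertex w.r.t. a set of 2-element edge sets -/
def dg (F : Finset (Finset (Fin n))) (v : Fin n) : ℕ :=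
  (F.filter (fun e => v ∈ e)).card

lemma dg_eq_nbr {F : Finset (Finset (Fin n))}
    (hF : ∀ e ∈ F, e.card = 2) (v : Fin n) :
    dg F v = ((univ.erase v).filter (fun w => ({v, w} : Finset (Fin n)) ∈ F)).card := by
  rw [dg]
  apply Finset.card_bij' (fun e _ => oth v e) (fun w _ => ({v, w} : Finset (Fin n)))
  · intro e he
    have hm := Finset.mem_filter.1 he
    obtain ⟨h1, h2⟩ := oth_spec (hF e hm.1) hm.2
    rw [Finset.mem_filter]
    exact ⟨Finset.mem_erase.2 ⟨h1, Finset.mem_univ _⟩, h2 ▸ hm.1⟩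
  · intro w hw
    have hm := Finset.mem_filter.1 hw
    exact Finset.mem_filter.2 ⟨hm.2, Finset.mem_insert_self _ _⟩
  · intro e he
    have hm := Finset.mem_filter.1 he
    exact (oth_spec (hF e hm.1) hm.2).2.symm
  · intro w hw
    have hm := Finset.mem_filter.1 hw
    have hwv : w ≠ v := (Finset.mem_erase.1 hm.1).1
    have hc : ({v, w} : Finset (Fin n)).card = 2 := Finset.card_pair (Ne.symm hwv)
    obtain ⟨h1, h2⟩ := oth_spec hc (Finset.mem_insert_self v _)
    have h3 : oth v {v, w} ∈ ({v, oth v {v, w}} : Finset (Fin n)) := by simp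
    have : oth v {v, w} ∈ ({v, w} : Finset (Fin n)) := (Finset.ext_iff.1 h2 _).2 h3
    rcases Finset.mem_insert.1 this with h | h
    · exact absurd h h1
    · exact (Finset.mem_singleton.1 h)

lemma sum_dg {F : Finset (Finset (Fin n))} (hF : ∀ e ∈ F, e.card = 2) :
    ∑ v, dg F v = 2 * F.card := by
  have : ∀ v, dg F v = ∑ e ∈ F, if v ∈ e then 1 else 0 := by
    intro v; rw [dg, Finset.card_filter]
  simp_rw [this]
  rw [Finset.sum_comm]
  rw [Finset.sum_congr rfl (fun e he => ?_), Finset.sum_const, smul_eq_mul, mul_comm]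
  rw [← Finset.card_filter]
  have : Finset.filter (fun v => v ∈ e) univ = e := by
    ext x; simp
  rw [this, hF e he]

def P2 (n : ℕ) : Finset (Finset (Fin n)) := univ.powersetCard 2

def ES (H : PDG (Fin n)) : Finset (Finset (Fin n)) := H.undir ∪ H.dir.image Prod.fst

def DS (H : PDG (Fin n)) : Finset (Finset (Fin n)) := H.dir.image Prod.fst

def EB (H : PDG (Fin n)) : Finset (Finset (Fin n)) := P2 n \ ES H

variable {H : PDG (Fin n)}

lemma P2_card2 : ∀ e ∈ P2 n, e.card = 2 := fun e he =>
  (Finset.mem_powersetCard.1 he).2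

lemma ES_card2 (hV : H.IsValid 2) : ∀ e ∈ ES H, e.card = 2 := by
  intro e he
  rcases Finset.mem_union.1 he with h | h
  · exact hV.1 e h
  · obtain ⟨p, hp, rfl⟩ := Finset.mem_image.1 h
    exact (hV.2.1 p hp).1

lemma ES_subset_P2 (hV : H.IsValid 2) : ES H ⊆ P2 n := by
  intro e he
  exact Finset.mem_powersetCard.2 ⟨Finset.subset_univ _, ES_card2 hV e he⟩

lemma EB_card2 : ∀ e ∈ EB H, e.card = 2 := fun e he =>
  P2_card2 e (Finset.mem_sdiff.1 he).1

lemma DS_subset : DS H ⊆ ES H := Finset.subset_union_right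

lemma card_P2 : (P2 n).card = n.choose 2 := by
  rw [P2, Finset.card_powersetCard, Finset.card_univ, Fintype.card_fin]

lemma card_DS (hV : H.IsValid 2) : (DS H).card = H.dir.card :=
  Finset.card_image_of_injOn (fun p hp q hq h => hV.2.2.2 p hp q hq h)

lemma card_ES (hV : H.IsValid 2) : (ES H).card = H.undir.card + H.dir.card := by
  rw [ES, Finset.card_union_of_disjoint, Finset.card_image_of_injOn
    (fun p hp q hq h => hV.2.2.2 p hp q hq h)]
  rw [Finset.disjoint_right]
  intro e he
  obtain ⟨p, hp, rfl⟩ := Finset.mem_image.1 he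
  exact hV.2.2.1 p hp

lemma card_EB (hV : H.IsValid 2) :
    (EB H).card + (H.undir.card + H.dir.card) = n.choose 2 := by
  rw [EB, Finset.card_sdiff_of_subset (ES_subset_P2 hV), ← card_ES hV, card_P2]
  have := Finset.card_le_card (ES_subset_P2 (H := H) hV)
  rw [card_P2] at this
  omega

lemma dg_P2 (v : Fin n) : dg (P2 n) v + 1 = n := by
  rw [dg_eq_nbr P2_card2]
  have : (univ.erase v).filter (fun w => ({v, w} : Finset (Fin n)) ∈ P2 n)
      = univ.erase v := by
    apply Finset.filter_true_of_mem
    intro w hw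
    exact Finset.mem_powersetCard.2 ⟨Finset.subset_univ _,
      Finset.card_pair (Ne.symm (Finset.mem_erase.1 hw).1)⟩
  rw [this, Finset.card_erase_of_mem (Finset.mem_univ v), Finset.card_univ,
    Fintype.card_fin]
  have : 0 < n := Fin.pos v
  omega

lemma dg_split (hV : H.IsValid 2) (v : Fin n) :
    dg (ES H) v + dg (EB H) v = dg (P2 n) v := by
  rw [dg, dg, dg, ← Finset.card_union_of_disjoint, ← Finset.filter_union, EB,
    Finset.union_sdiff_of_subset (ES_subset_P2 hV)]
  exact Finset.disjoint_filter_filter (Finset.disjoint_sdiff)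

lemma mem_ES_iff {e : Finset (Fin n)} :
    e ∈ ES H ↔ e ∈ H.undir ∨ ∃ h, (e, h) ∈ H.dir := by
  rw [ES, Finset.mem_union, Finset.mem_image]
  constructor
  · rintro (h | ⟨p, hp, rfl⟩)
    · exact Or.inl h
    · exact Or.inr ⟨p.2, hp⟩
  · rintro (h | ⟨h, hh⟩)
    · exact Or.inl h
    · exact Or.inr ⟨(e, h), hh, rfl⟩

lemma build_T2 (x z w : Fin n) (hxz : x ≠ z) (hxw : x ≠ w) (hzw : z ≠ w)
    (h1 : ({x, w} : Finset (Fin n)) ∈ ES H)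
    (h2 : ({w, z} : Finset (Fin n)) ∈ ES H)
    (hd : ((({x, z} : Finset (Fin n)), z)) ∈ H.dir) :
    (TkPDG 2).IsSubgraph H := by
  have hu : (TkPDG 2).undir = {({0,1} : Finset (Fin 3)), {1,2}} := by decide
  have hdr : (TkPDG 2).dir = {(({0,2} : Finset (Fin 3)), 2)} := by decide
  refine ⟨![x, w, z], ?_, ?_, ?_⟩
  · intro i j hij
    fin_cases i <;> fin_cases j <;> simp_all
  · intro e he
    rw [hu] at he
    have hES : ∀ f : Finset (Fin n), f ∈ ES H →
        (f ∈ H.undir ∨ ∃ v, (f, v) ∈ H.dir) := fun f hf => mem_ES_iff.1 hf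
    rcases Finset.mem_insert.1 he with rfl | hee
    · have : (({0,1} : Finset (Fin 3)).image ![x,w,z]) = {x, w} := by
        simp [Finset.image_insert, Finset.image_singleton]
      rw [this]; exact hES _ h1
    · rw [Finset.mem_singleton.1 hee]
      have : (({1,2} : Finset (Fin 3)).image ![x,w,z]) = {w, z} := by
        simp [Finset.image_insert, Finset.image_singleton]
      rw [this]; exact hES _ h2
  · intro p hp
    rw [hdr, Finset.mem_singleton] at hp
    subst hp
    have h3 : (({0,2} : Finset (Fin 3)).image ![x,w,z]) = {x, z} := by
      simp [Finset.image_insert, Finset.image_singleton]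
    simpa [h3] using hd

/-- The key structural consequence of `T₂`-freeness: endpoints of a directed
edge have no common neighbour. -/
lemma no_cherry (hV : H.IsValid 2) (hT2 : ¬ (TkPDG 2).IsSubgraph H)
    {u v w : Fin n} (huv : u ≠ v)
    (hD : ({u, v} : Finset (Fin n)) ∈ DS H)
    (h1 : ({u, w} : Finset (Fin n)) ∈ ES H)
    (h2 : ({v, w} : Finset (Fin n)) ∈ ES H) : False := by
  have hwu : w ≠ u := by
    rintro rfl
    have := ES_card2 hV _ h1
    simp at this
  have hwv : w ≠ v := by
    rintro rfl
    have := ES_card2 hV _ h2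
    simp at this
  obtain ⟨p, hp, hp1⟩ := Finset.mem_image.1 hD
  have hhd : p.2 = u ∨ p.2 = v := by
    have := (hV.2.1 p hp).2
    rw [hp1] at this
    simpa using this
  rcases hhd with h | h
  · -- head is u : use x := v, z := u
    apply hT2
    apply build_T2 v u w (Ne.symm huv) hwv.symm hwu.symm
      h2 (by rwa [Finset.pair_comm w u])
    have : p = (({v, u} : Finset (Fin n)), u) := by
      rw [Prod.ext_iff]
      exact ⟨by rw [hp1, Finset.pair_comm], h⟩
    rwa [← this]
  · -- head is v : use x := u, z := v
    apply hT2
    apply build_T2 u v w huv hwu.symm hwv.symm h1 (by rwa [Finset.pair_comm w v])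
    have : p = (({u, v} : Finset (Fin n)), v) := by
      rw [Prod.ext_iff]
      exact ⟨hp1, h⟩
    rwa [← this]

lemma deg_sum_le (hV : H.IsValid 2) (hT2 : ¬ (TkPDG 2).IsSubgraph H)
    {u v : Fin n} (huv : u ≠ v) (hD : ({u, v} : Finset (Fin n)) ∈ DS H) :
    dg (ES H) u + dg (ES H) v ≤ n := by
  rw [dg_eq_nbr (ES_card2 hV), dg_eq_nbr (ES_card2 hV)]
  rw [← Finset.card_union_of_disjoint]
  · calc _ ≤ (univ : Finset (Fin n)).card := Finset.card_le_card (Finset.subset_univ _)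
    _ = n := by rw [Finset.card_univ, Fintype.card_fin]
  · rw [Finset.disjoint_left]
    intro w hw1 hw2
    exact no_cherry hV hT2 huv hD (Finset.mem_filter.1 hw1).2 (Finset.mem_filter.1 hw2).2

lemma a_le_d (v : Fin n) : dg (DS H) v ≤ dg (ES H) v :=
  Finset.card_le_card (Finset.monotone_filter_left _ DS_subset)

lemma d_add_y (hV : H.IsValid 2) (v : Fin n) :
    dg (ES H) v + dg (EB H) v + 1 = n := by
  rw [dg_split hV, dg_P2]

lemma a_le_M (hV : H.IsValid 2) (hT2 : ¬ (TkPDG 2).IsSubgraph H) (v : Fin n) :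
    dg (DS H) v ≤
      ((univ.erase v).filter (fun u => n ≤ dg (EB H) u + dg (EB H) v + 2)).card := by
  rw [dg_eq_nbr (fun e he => ES_card2 hV e (DS_subset he))]
  apply Finset.card_le_card
  intro w hw
  obtain ⟨hw1, hw2⟩ := Finset.mem_filter.1 hw
  have hvw : v ≠ w := fun h => (Finset.mem_erase.1 hw1).1 h.symm
  have h1 := deg_sum_le hV hT2 hvw hw2
  have h2 := d_add_y hV v
  have h3 := d_add_y hV w
  exact Finset.mem_filter.2 ⟨hw1, by omega⟩

lemma card_dir_filter (hV : H.IsValid 2) (v : Fin n) :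
    (H.dir.filter (fun p => v ∈ p.1)).card = dg (DS H) v := by
  rw [dg]
  have himg : (DS H).filter (fun e => v ∈ e)
      = (H.dir.filter (fun p => v ∈ p.1)).image Prod.fst := by
    ext e
    simp only [Finset.mem_filter, Finset.mem_image, DS]
    constructor
    · rintro ⟨⟨p, hp, rfl⟩, hv⟩
      exact ⟨p, ⟨hp, hv⟩, rfl⟩
    · rintro ⟨p, ⟨hp, hv⟩, rfl⟩
      exact ⟨⟨p, hp, rfl⟩, hv⟩
  rw [himg, Finset.card_image_of_injOn]
  intro p hp q hq h
  exact hV.2.2.2 p (Finset.mem_filter.1 hp).1 q (Finset.mem_filter.1 hq).1 h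

lemma swap_sum (hV : H.IsValid 2) :
    ∑ p ∈ H.dir, ∑ v ∈ p.1, dg (EB H) v
      = ∑ v, dg (DS H) v * dg (EB H) v := by
  have h1 : ∀ p ∈ H.dir, ∑ v ∈ p.1, dg (EB H) v
      = ∑ v, if v ∈ p.1 then dg (EB H) v else 0 := by
    intro p _
    rw [← Finset.sum_filter]
    congr 1
    ext x; simp
  rw [Finset.sum_congr rfl h1, Finset.sum_comm]
  apply Finset.sum_congr rfl
  intro v _
  rw [← Finset.sum_filter, Finset.sum_const, ← card_dir_filter hV v, smul_eq_mul]

lemma main_count (hV : H.IsValid 2) (hT2 : ¬ (TkPDG 2).IsSubgraph H) :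
    n * H.dir.card ≤ (∑ v, dg (DS H) v * dg (EB H) v) + 2 * H.dir.card := by
  have hper : ∀ p ∈ H.dir, n ≤ (∑ v ∈ p.1, dg (EB H) v) + 2 := by
    intro p hp
    obtain ⟨u, v, huv, he⟩ := Finset.card_eq_two.1 (hV.2.1 p hp).1
    have hD : ({u, v} : Finset (Fin n)) ∈ DS H := by
      rw [DS, Finset.mem_image]; exact ⟨p, hp, he⟩
    have h1 := deg_sum_le hV hT2 huv hD
    have h2 := d_add_y hV u
    have h3 := d_add_y hV v
    rw [he, Finset.sum_pair huv]
    omega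
  calc n * H.dir.card = ∑ _p ∈ H.dir, n := by
        rw [Finset.sum_const, smul_eq_mul, mul_comm]
    _ ≤ ∑ p ∈ H.dir, ((∑ v ∈ p.1, dg (EB H) v) + 2) := Finset.sum_le_sum hper
    _ = (∑ p ∈ H.dir, ∑ v ∈ p.1, dg (EB H) v) + 2 * H.dir.card := by
        rw [Finset.sum_add_distrib, Finset.sum_const, smul_eq_mul, mul_comm]
    _ = _ := by rw [swap_sum hV]



/-- The purely arithmetic extremal lemma. -/
lemma extremal (m : ℕ) (a y : Fin m → ℕ)
    (h1 : ∀ v, a v + y v + 1 ≤ m)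
    (h2 : ∀ v, a v ≤ ((univ.erase v).filter (fun u => m ≤ y u + y v + 2)).card) :
    2 * (∑ v, (a v : ℤ) * y v) ≤ ((m : ℤ) - 2) * ∑ v, (y v : ℤ) + 20 * m ^ 2 := by
  have key : ∑ v, ((2 * a v + 2 - m) * y v : ℤ) ≤ 20 * m ^ 2 := by
    set g : Fin m → ℤ := fun v => (y v : ℤ) * (m - 2 * y v) with hg
    have hgeq : ∀ v, g v = (y v : ℤ) * (m - 2 * y v) := fun v => rfl
    set A : Finset (Fin m) := univ.filter (fun v => m + 1 ≤ 2 * a v + 2 ∧ 1 ≤ y v) with hA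
    have hmsq : (0 : ℤ) ≤ 20 * m ^ 2 := by positivity
    have hnonpos : ∀ v ∉ A, ((2 * a v + 2 - m) * y v : ℤ) ≤ 0 := by
      intro v hv
      rw [hA, Finset.mem_filter] at hv
      push_neg at hv
      rcases le_or_gt (2 * a v + 2) m with h | h
      · apply mul_nonpos_of_nonpos_of_nonneg
        · have : (2 * a v + 2 : ℤ) ≤ m := by exact_mod_cast h
          linarith
        · positivity
      · have h0 : y v = 0 := by
          have := hv (Finset.mem_univ v) (by omega)
          omega
        simp [h0]
    have hterm_le_g : ∀ v, ((2 * a v + 2 - m) * y v : ℤ) ≤ g v := by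
      intro v
      rw [hg]
      have hy : (0 : ℤ) ≤ (y v : ℤ) := by positivity
      have : (2 * a v + 2 - m : ℤ) ≤ (m : ℤ) - 2 * y v := by
        have := h1 v
        have : ((a v : ℤ) + y v + 1) ≤ m := by exact_mod_cast this
        linarith
      calc ((2 * a v + 2 - m) * y v : ℤ) ≤ ((m : ℤ) - 2 * y v) * y v :=
            mul_le_mul_of_nonneg_right this hy
        _ = (y v : ℤ) * (m - 2 * y v) := by ring
    rcases Finset.eq_empty_or_nonempty A with hAe | hAne
    · calc ∑ v, ((2 * a v + 2 - m) * y v : ℤ) ≤ 0 := by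
            apply Finset.sum_nonpos
            intro v _
            exact hnonpos v (by rw [hAe]; exact Finset.notMem_empty v)
        _ ≤ 20 * m ^ 2 := hmsq
    obtain ⟨w, hwA, hwmax⟩ := Finset.exists_max_image A g hAne
    have hwA' := Finset.mem_filter.1 hwA
    have hyw1 : 1 ≤ y w := hwA'.2.2
    have hywm : y w + 1 ≤ m := by have := h1 w; omega
    rcases le_or_gt m (2 * y w + 10) with hcase | hcase
    · -- g w ≤ 10 m, everything small
      have hgw : g w ≤ 10 * m := by
        rw [hgeq w]
        have hy : (0 : ℤ) ≤ (y w : ℤ) := by positivity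
        have h10 : ((m : ℤ) - 2 * y w) ≤ 10 := by
          have : (m : ℤ) ≤ 2 * y w + 10 := by exact_mod_cast hcase
          linarith
        have hym : (y w : ℤ) ≤ m := by exact_mod_cast le_of_lt (by omega : y w < m)
        nlinarith
      calc ∑ v, ((2 * a v + 2 - m) * y v : ℤ)
          = ∑ v ∈ A, ((2 * a v + 2 - m) * y v : ℤ)
            + ∑ v ∈ univ \ A, ((2 * a v + 2 - m) * y v : ℤ) := by
            rw [← Finset.sum_union (Finset.disjoint_sdiff)]
            congr 1
            rw [Finset.union_sdiff_of_subset (Finset.subset_univ _)]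
        _ ≤ ∑ v ∈ A, (10 * m : ℤ) + 0 := by
            apply add_le_add
            · apply Finset.sum_le_sum
              intro v hv
              exact le_trans (hterm_le_g v) (le_trans (hwmax v hv) hgw)
            · apply Finset.sum_nonpos
              intro v hv
              exact hnonpos v (Finset.mem_sdiff.1 hv).2
        _ = A.card * (10 * m) := by rw [Finset.sum_const, nsmul_eq_mul, add_zero]
        _ ≤ m * (10 * m) := by
            have : (A.card : ℤ) ≤ m := by
              have := Finset.card_le_univ A
              simp only [Finset.card_univ, Fintype.card_fin] at this
              exact_mod_cast this
            have : (0:ℤ) ≤ 10 * m := by positivity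
            nlinarith [Finset.card_le_univ A]
        _ ≤ 20 * m ^ 2 := by nlinarith [Nat.cast_nonneg (α := ℤ) m]
    · -- main case
      set P : Finset (Fin m) := (univ.erase w).filter (fun u => m ≤ y u + y w + 2)
        with hP
      have haP : (a w : ℤ) ≤ P.card := by exact_mod_cast h2 w
      have hPbig : (m : ℤ) + 1 ≤ 2 * P.card + 2 := by
        have := hwA'.2.1
        have : ((m : ℤ) + 1) ≤ 2 * a w + 2 := by exact_mod_cast this
        linarith
      have hyP : ∀ u ∈ P, (m : ℤ) ≤ (y u : ℤ) + y w + 2 := by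
        intro u hu
        have := (Finset.mem_filter.1 hu).2
        exact_mod_cast this
      have hPA : ∀ u ∈ P, u ∉ A := by
        intro u hu huA
        have h3 := hyP u hu
        have h4 := (Finset.mem_filter.1 huA).2.1
        have h5 : ((m : ℤ) + 1) ≤ 2 * a u + 2 := by exact_mod_cast h4
        have h6 : ((a u : ℤ) + y u + 1) ≤ m := by exact_mod_cast h1 u
        have h7 : ((m : ℤ)) > 2 * y w + 10 := by exact_mod_cast hcase
        linarith
      have hgw0 : 0 ≤ g w := by
        rw [hgeq w]
        have h7 : ((m : ℤ)) > 2 * y w + 10 := by exact_mod_cast hcase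
        have : (1 : ℤ) ≤ y w := by exact_mod_cast hyw1
        nlinarith
      have hgwsq : g w ≤ (m : ℤ) ^ 2 := by
        rw [hgeq w]
        have hym : (y w : ℤ) ≤ m := by exact_mod_cast le_of_lt (by omega : y w < m)
        have hy : (0 : ℤ) ≤ (y w : ℤ) := by positivity
        nlinarith [Nat.cast_nonneg (α := ℤ) m]
      have hPloss : ∀ u ∈ P, ((2 * a u + 2 - m) * y u : ℤ) ≤ 4 * m - g w := by
        intro u hu
        have h3 := hyP u hu
        have h7 : ((m : ℤ)) > 2 * y w + 10 := by exact_mod_cast hcase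
        have hyu : ((a u : ℤ) + y u + 1) ≤ m := by exact_mod_cast h1 u
        have hy : (0 : ℤ) ≤ (y u : ℤ) := by positivity
        have hyw : (0 : ℤ) ≤ (y w : ℤ) := by positivity
        have hym : (y w : ℤ) ≤ m := by exact_mod_cast le_of_lt (by omega : y w < m)
        refine le_trans (hterm_le_g u) ?_
        rw [hgeq u, hgeq w]
        have hint1 : ((y u:ℤ) - ((m:ℤ) - 2 - y w))
            * (2*((y u:ℤ) + ((m:ℤ) - 2 - y w)) - m) ≥ 0 := by
          apply mul_nonneg <;> linarith
        have hint2 : (((m:ℤ) - 2 - y w) - y w) * (2*((m:ℤ) - 2 - y w) - m) ≥ 0 := by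
          apply mul_nonneg <;> linarith
        nlinarith [hint1, hint2]
      have hdisj : Disjoint A P := by
        rw [Finset.disjoint_right]
        exact hPA
      have hcards : (A.card : ℤ) + P.card ≤ m := by
        have := Finset.card_le_univ (A ∪ P)
        rw [Finset.card_union_of_disjoint hdisj, Fintype.card_fin] at this
        exact_mod_cast this
      have split1 : ∑ v, ((2 * a v + 2 - m) * y v : ℤ)
          = ∑ v ∈ A, ((2 * a v + 2 - m) * y v : ℤ)
            + ∑ v ∈ P, ((2 * a v + 2 - m) * y v : ℤ)
            + ∑ v ∈ univ \ (A ∪ P), ((2 * a v + 2 - m) * y v : ℤ) := by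
        rw [← Finset.sum_union hdisj, ← Finset.sum_union (Finset.disjoint_sdiff)]
        congr 1
        rw [Finset.union_sdiff_of_subset (Finset.subset_univ _)]
      have hArest : ∑ v ∈ univ \ (A ∪ P), ((2 * a v + 2 - m) * y v : ℤ) ≤ 0 := by
        apply Finset.sum_nonpos
        intro v hv
        have := Finset.mem_sdiff.1 hv
        exact hnonpos v (fun h => this.2 (Finset.mem_union_left _ h))
      have hAsum : ∑ v ∈ A, ((2 * a v + 2 - m) * y v : ℤ) ≤ A.card * g w := by
        rw [← nsmul_eq_mul]
        apply Finset.sum_le_card_nsmul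
        intro v hv
        exact le_trans (hterm_le_g v) (hwmax v hv)
      have hPsum : ∑ v ∈ P, ((2 * a v + 2 - m) * y v : ℤ)
          ≤ P.card * (4 * m - g w) := by
        rw [← nsmul_eq_mul]
        exact Finset.sum_le_card_nsmul _ _ _ hPloss
      have hPn : (P.card : ℤ) ≤ m := by
        have := Finset.card_le_univ P
        rw [Fintype.card_fin] at this
        exact_mod_cast this
      have hfin : (A.card : ℤ) * g w + P.card * (4 * m - g w) ≤ 20 * m ^ 2 := by
        have hAP1 : (A.card : ℤ) - P.card ≤ 1 := by linarith
        have hm0 : (0 : ℤ) ≤ m := Nat.cast_nonneg m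
        nlinarith [mul_nonneg (Nat.cast_nonneg (α := ℤ) P.card) hgw0]
      linarith [split1, hArest, hAsum, hPsum, hfin]
  have hexp : ∑ v, ((2 * a v + 2 - m) * y v : ℤ)
      = 2 * (∑ v, (a v : ℤ) * y v) - ((m:ℤ) - 2) * ∑ v, (y v : ℤ) := by
    rw [Finset.mul_sum, Finset.mul_sum, ← Finset.sum_sub_distrib]
    apply Finset.sum_congr rfl
    intro v _
    ring
  linarith [key, hexp.symm.le]

end AuxProof

/-- `π(T_2, 2) = 1`: for every `ε > 0` there is `n₀` such that every
`T_2`-free `2`-PDG on `n ≥ n₀` vertices satisfies `e_u(H) + 2·e_d(H) ≤ (1+ε)·C(n,2)`. -/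
theorem turan_T2 (ε : ℝ) (hε : 0 < ε) :
    ∃ n₀ : ℕ, ∀ n ≥ n₀, ∀ H : PDG (Fin n),
      H.IsValid 2 → ¬ (TkPDG 2).IsSubgraph H →
      (H.undir.card : ℝ) + 2 * H.dir.card ≤ (1 + ε) * n.choose 2 := by
  refine ⟨max 5 (⌈80 / ε⌉₊ + 2), fun n hn H hV hT2 => ?_⟩
  have hn5 : 5 ≤ n := le_trans (le_max_left _ _) hn
  have hnc : ⌈80 / ε⌉₊ + 2 ≤ n := le_trans (le_max_right _ _) hn
  -- step 1 : e_d ≤ |EB| + 40 n  (in ℤ)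
  have hext := extremal n (dg (DS H)) (dg (EB H))
    (fun v => by have := a_le_d (H := H) v; have := d_add_y hV v; omega)
    (fun v => a_le_M hV hT2 v)
  have hmain := main_count hV hT2
  have hy2 : ∑ v, dg (EB H) v = 2 * (EB H).card := sum_dg EB_card2
  have hmainZ : ((n : ℤ) - 2) * H.dir.card ≤ ∑ v, (dg (DS H) v : ℤ) * dg (EB H) v := by
    have : (n : ℤ) * H.dir.card ≤ (∑ v, (dg (DS H) v : ℤ) * dg (EB H) v)
        + 2 * H.dir.card := by
      have := hmain
      have hcast : ((∑ v, dg (DS H) v * dg (EB H) v : ℕ) : ℤ)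
          = ∑ v, (dg (DS H) v : ℤ) * dg (EB H) v := by push_cast; rfl
      calc (n : ℤ) * H.dir.card = ((n * H.dir.card : ℕ) : ℤ) := by push_cast; ring
        _ ≤ (((∑ v, dg (DS H) v * dg (EB H) v) + 2 * H.dir.card : ℕ) : ℤ) := by
            exact_mod_cast this
        _ = _ := by push_cast; rfl
    linarith
  have hy2Z : ∑ v, (dg (EB H) v : ℤ) = 2 * (EB H).card := by
    calc ∑ v, (dg (EB H) v : ℤ) = ((∑ v, dg (EB H) v : ℕ) : ℤ) := by push_cast; rfl
      _ = _ := by rw [hy2]; push_cast; ring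
  have hnZ : (5 : ℤ) ≤ n := by exact_mod_cast hn5
  have hed : (H.dir.card : ℤ) ≤ (EB H).card + 40 * n := by
    have hstep : ((n:ℤ) - 2) * H.dir.card ≤ ((n:ℤ) - 2) * ((EB H).card + 40 * n) := by
      have h2' : 2 * (((n:ℤ) - 2) * H.dir.card)
          ≤ ((n : ℤ) - 2) * (2 * (EB H).card) + 20 * n ^ 2 := by
        rw [hy2Z] at hext
        linarith
      nlinarith
    have hpos : (0 : ℤ) < (n : ℤ) - 2 := by linarith
    exact le_of_mul_le_mul_left hstep hpos
  -- step 2 : conclude in ℝ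
  have hEB := card_EB hV
  have hedR : (H.dir.card : ℝ) ≤ (EB H).card + 40 * n := by exact_mod_cast hed
  have hEBR : ((EB H).card : ℝ) + (H.undir.card + H.dir.card) = n.choose 2 := by
    exact_mod_cast hEB
  have hchoose : ((n.choose 2 : ℕ) : ℝ) = n * (n - 1) / 2 :=
    Nat.cast_choose_two (K := ℝ) n
  have hnR : (80 / ε : ℝ) + 1 ≤ (n : ℝ) - 1 := by
    have h1 : (80 / ε : ℝ) ≤ ⌈80 / ε⌉₊ := Nat.le_ceil _
    have h2 : ((⌈80 / ε⌉₊ : ℕ) : ℝ) + 2 ≤ n := by exact_mod_cast hnc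
    linarith
  have heps : 40 * (n : ℝ) ≤ ε * n.choose 2 := by
    rw [hchoose]
    have hn0 : (0 : ℝ) < n := by positivity
    have h80 : (80 : ℝ) ≤ ε * ((n : ℝ) - 1) := by
      have : (80 / ε : ℝ) ≤ (n : ℝ) - 1 := by linarith
      calc (80 : ℝ) = ε * (80 / ε) := by field_simp
        _ ≤ ε * ((n : ℝ) - 1) := by
            exact mul_le_mul_of_nonneg_left this (le_of_lt hε)
    have := mul_le_mul_of_nonneg_left h80 (le_of_lt hn0)
    nlinarith
  calc (H.undir.card : ℝ) + 2 * H.dir.card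
      = (H.undir.card + H.dir.card : ℝ) + H.dir.card := by ring
    _ ≤ ((n.choose 2 : ℕ) : ℝ) - (EB H).card + ((EB H).card + 40 * n) := by
        linarith [hedR, hEBR]
    _ = ((n.choose 2 : ℕ) : ℝ) + 40 * n := by ring
    _ ≤ (1 + ε) * n.choose 2 := by linarith [heps]
end

section
/- For every ε > 0 there exists n₀ such that every T_3-free partially directed 3-graph H on n ≥ n₀ vertices satisfies e_u(H) + (5/3)·e_d(H) ≤ (1+ε)·C(n,3), where C(n,3) is the binomial coefficient 'n choose 3'. (In other words, π(T_3, 5/3) = 1.) -/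
/-!
Give each pair `R` of vertices of a `3`-PDG on `n` vertices with codegree `d(R)` the weight
`(n - 2 - d(R)) / d(R)`. If `{v, w₁, w₂}` is directed toward `v` and `H` is `T_3`-free, the
links of `{w₁, w₂}` and of `{v, wᵢ}` are disjoint, so `d(w₁w₂) + d(vwᵢ) ≤ n`; for `n ≥ 15` this
forces the weights of the three pairs of the edge to sum to at least `2`. A pair `R` lies in at
most `d(R)` directed edges, so double counting gives
`2 e_d ≤ ∑_R (n - 2 - d(R)) = 3 C(n,3) - 3 (e_u + e_d)`, i.e. `e_u + 5/3 e_d ≤ C(n,3)`.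
-/

open Finset

lemma Finset.sum_powersetCard_two_triple {α M : Type*} [DecidableEq α] [AddCommMonoid M]
    (f : Finset α → M) {x y z : α} (hxy : x ≠ y) (hxz : x ≠ z) (hyz : y ≠ z) :
    ∑ R ∈ ({x, y, z} : Finset α).powersetCard 2, f R = f {x, y} + f {x, z} + f {y, z} := by
  have hx : x ∉ ({y, z} : Finset α) := by simp [hxy, hxz]
  have hself : ({y, z} : Finset α).powersetCard 2 = {{y, z}} := by
    simpa [card_pair hyz] using powersetCard_self ({y, z} : Finset α)
  rw [powersetCard_succ_insert hx 1, hself, powersetCard_one, sum_union, sum_image, sum_map,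
    sum_pair hyz, sum_singleton]
  · simp only [Function.Embedding.coeFn_mk]
    abel
  · intro a ha b hb hab
    simp only [coe_map, Function.Embedding.coeFn_mk, Set.mem_image, mem_coe] at ha hb
    obtain ⟨a, ha, rfl⟩ := ha
    obtain ⟨b, hb, rfl⟩ := hb
    have hax : a ≠ x := fun h => hx (h ▸ ha)
    have : a ∈ insert x {b} := hab ▸ mem_insert_of_mem (mem_singleton_self a)
    rw [mem_insert, mem_singleton] at this
    rw [this.resolve_left hax]
  · simp only [disjoint_singleton_left, mem_image, mem_map, Function.Embedding.coeFn_mk]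
    rintro ⟨_, ⟨_, _, rfl⟩, h⟩
    exact hx (h ▸ mem_insert_self x _)

lemma two_le_div_add_div_add_div {a b c N : ℝ} (hN : 15 ≤ N) (ha : 1 ≤ a) (hb : 1 ≤ b)
    (hc : 1 ≤ c) (hab : a + b ≤ N) (hac : a + c ≤ N) :
    2 ≤ (N - 2 - a) / a + (N - 2 - b) / b + (N - 2 - c) / c := by
  have ha₀ : 0 < a := by linarith
  have hb₀ : 0 < b := by linarith
  have hc₀ : 0 < c := by linarith
  have hN₂ : 0 ≤ N - 2 := by linarith
  -- The discriminant of this quadratic in `a` is `-4 (N² - 14 N - 1) < 0`: this is where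
  -- the threshold `N ≥ 15` comes from.
  have hquad : 0 ≤ 5 * a ^ 2 - 4 * a * N + N ^ 2 - 2 * N - 2 * a := by
    nlinarith [sq_nonneg (10 * a - 4 * N - 2)]
  have hcleared : 0 ≤ (N - 2) * (a * b + b * c + c * a) - 5 * (a * b * c) := by
    refine nonneg_of_mul_nonneg_left ?_ (by linarith : 0 < N - a)
    linear_combination mul_nonneg (mul_nonneg hb₀.le hc₀.le) hquad
      + mul_nonneg (mul_nonneg (mul_nonneg ha₀.le hN₂) hb₀.le) (sub_nonneg.2 hac)
      + mul_nonneg (mul_nonneg (mul_nonneg ha₀.le hN₂) hc₀.le) (sub_nonneg.2 hab)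
  have heq : (N - 2 - a) / a + (N - 2 - b) / b + (N - 2 - c) / c
      = 2 + ((N - 2) * (a * b + b * c + c * a) - 5 * (a * b * c)) / (a * b * c) := by
    field_simp
    ring
  rw [heq]
  exact le_add_of_nonneg_right (div_nonneg hcleared (by positivity))

lemma Nat.cast_choose_two_mul_sub_two {R : Type*} [CommRing R] (n : ℕ) :
    (n.choose 2 : R) * (n - 2) = 3 * n.choose 3 := by
  rcases lt_or_ge n 2 with h | h
  · simp [Nat.choose_eq_zero_of_lt h, Nat.choose_eq_zero_of_lt (h.trans (by norm_num : 2 < 3))]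
  · have h3 : n.choose 3 * 3 = n.choose 2 * (n - 2) := Nat.choose_succ_right_eq n 2
    have h2 : ((n - 2 : ℕ) : R) = n - 2 := by push_cast [h]; ring
    rw [← h2, ← Nat.cast_mul, ← h3]
    push_cast
    ring

namespace PDG

variable {V : Type*} [DecidableEq V]

def edges (H : PDG V) : Finset (Finset V) := H.undir ∪ H.dir.image Prod.fst

def codegree (H : PDG V) (R : Finset V) : ℕ := #{e ∈ H.edges | R ⊆ e}

variable {H : PDG V} {k : ℕ}

lemma mem_edges {e : Finset V} : e ∈ H.edges ↔ e ∈ H.undir ∨ ∃ v, (e, v) ∈ H.dir := by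
  simp [edges]

lemma IsValid.card_of_mem_edges (hH : H.IsValid k) {e : Finset V} (he : e ∈ H.edges) :
    #e = k := by
  rcases mem_edges.1 he with he | ⟨v, hv⟩
  · exact hH.1 e he
  · exact (hH.2.1 _ hv).1

lemma IsValid.card_edges (hH : H.IsValid k) : #H.edges = #H.undir + #H.dir := by
  rw [edges, card_union_of_disjoint, card_image_of_injOn fun p hp q hq => hH.2.2.2 p hp q hq]
  exact disjoint_right.2 fun e he => by
    obtain ⟨p, hp, rfl⟩ := mem_image.1 he
    exact hH.2.2.1 p hp

lemma IsValid.card_filter_dir_le_codegree (hH : H.IsValid k) (R : Finset V) :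
    #{p ∈ H.dir | R ⊆ p.1} ≤ H.codegree R :=
  card_le_card_of_injOn Prod.fst
    (fun p hp => by
      obtain ⟨hp, hR⟩ := mem_filter.1 (mem_coe.1 hp)
      exact mem_filter.2 ⟨mem_edges.2 (Or.inr ⟨p.2, hp⟩), hR⟩)
    (fun p hp q hq => hH.2.2.2 p (mem_filter.1 hp).1 q (mem_filter.1 hq).1)

lemma IsValid.exists_eq_of_mem_dir (hH : H.IsValid 3) {p : Finset V × V} (hp : p ∈ H.dir) :
    ∃ v w₁ w₂, v ≠ w₁ ∧ v ≠ w₂ ∧ w₁ ≠ w₂ ∧ p = ({v, w₁, w₂}, v) := by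
  obtain ⟨hcard, hv⟩ := hH.2.1 p hp
  obtain ⟨w₁, w₂, hw, hpair⟩ := card_eq_two.1 (by rw [card_erase_of_mem hv, hcard] :
    #(p.1.erase p.2) = 2)
  have hw₁ : w₁ ∈ p.1.erase p.2 := by simp [hpair]
  have hw₂ : w₂ ∈ p.1.erase p.2 := by simp [hpair]
  refine ⟨p.2, w₁, w₂, (ne_of_mem_erase hw₁).symm, (ne_of_mem_erase hw₂).symm, hw, ?_⟩
  rw [← hpair, insert_erase hv]

lemma one_le_codegree_of_subset {R e : Finset V} (he : e ∈ H.edges) (hR : R ⊆ e) :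
    1 ≤ H.codegree R :=
  card_pos.2 ⟨e, mem_filter.2 ⟨he, hR⟩⟩

lemma tkPDG_three_isSubgraph {a b c d : V} (hab : a ≠ b) (hac : a ≠ c) (had : a ≠ d)
    (hbc : b ≠ c) (hbd : b ≠ d) (hcd : c ≠ d) (habc : {a, b, c} ∈ H.edges)
    (hacd : {a, c, d} ∈ H.edges) (habd : ({a, b, d}, d) ∈ H.dir) :
    (TkPDG 3).IsSubgraph H := by
  have hundir : (TkPDG 3).undir = {{0, 1, 2}, {0, 2, 3}} := by decide
  have hdir : (TkPDG 3).dir = {({0, 1, 3}, 3)} := by decide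
  refine ⟨![a, b, c, d], ?_, ?_, ?_⟩
  · intro i j hij
    fin_cases i <;> fin_cases j <;> simp_all [eq_comm]
  · simp only [hundir, mem_insert, mem_singleton, forall_eq_or_imp, forall_eq]
    exact ⟨by simpa using mem_edges.1 habc, by simpa using mem_edges.1 hacd⟩
  · simpa [hdir] using habd

variable [Fintype V]

def link (H : PDG V) (R : Finset V) : Finset V := {z | z ∉ R ∧ insert z R ∈ H.edges}

lemma IsValid.card_link (hH : H.IsValid (k + 1)) {R : Finset V} (hR : #R = k) :
    #(H.link R) = H.codegree R := by
  refine card_bij (fun z _ => insert z R) (fun z hz => ?_) (fun z hz z' hz' h => ?_)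
    (fun e he => ?_)
  · obtain ⟨-, hzR, hz⟩ := mem_filter.1 hz
    exact mem_filter.2 ⟨hz, subset_insert z R⟩
  · have hzR : z ∉ R := (mem_filter.1 hz).2.1
    have := h ▸ mem_insert_self z R
    exact (mem_insert.1 this).resolve_right hzR
  · obtain ⟨he, hRe⟩ := mem_filter.1 he
    have hcard := hH.card_of_mem_edges he
    obtain ⟨z, hze, hzR⟩ := exists_of_ssubset (ssubset_of_subset_of_ne hRe (by
      rintro rfl; omega))
    have hins : insert z R = e :=
      eq_of_subset_of_card_le (insert_subset hze hRe) (by rw [card_insert_of_notMem hzR]; omega)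
    exact ⟨z, by simpa [link, hzR, hins] using he, hins⟩

lemma IsValid.codegree_add_le (hH : H.IsValid (k + 1)) {R : Finset V} (hR : #R = k) :
    H.codegree R + k ≤ Fintype.card V := by
  rw [← hH.card_link hR, ← hR, ← card_union_of_disjoint]
  · exact card_le_univ _
  · exact disjoint_left.2 fun z hz => (mem_filter.1 hz).2.1

lemma IsValid.sum_codegree (hH : H.IsValid k) (j : ℕ) :
    ∑ R ∈ univ.powersetCard j, H.codegree R = k.choose j * #H.edges := by
  simp only [codegree, card_filter]
  rw [sum_comm, mul_comm, ← smul_eq_mul, ← sum_const]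
  refine sum_congr rfl fun e he => ?_
  rw [← card_filter, ← hH.card_of_mem_edges he, ← card_powersetCard]
  congr 1
  ext R
  simp [mem_powersetCard, and_comm]

lemma disjoint_link_of_mem_dir (hfree : ¬ (TkPDG 3).IsSubgraph H) {v w₁ w₂ : V}
    (hvw₁ : v ≠ w₁) (hvw₂ : v ≠ w₂) (hw : w₁ ≠ w₂) (hp : ({v, w₁, w₂}, v) ∈ H.dir) :
    Disjoint (H.link {w₁, w₂}) (H.link {v, w₁}) := by
  refine disjoint_left.2 fun z hz₁ hz₂ => hfree ?_
  obtain ⟨-, hzw, hz₁⟩ := mem_filter.1 hz₁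
  obtain ⟨-, hzv, hz₂⟩ := mem_filter.1 hz₂
  simp only [mem_insert, mem_singleton, not_or] at hzw hzv
  refine tkPDG_three_isSubgraph (a := w₁) (b := w₂) (c := z) (d := v) hw (Ne.symm hzw.1)
    hvw₁.symm (Ne.symm hzw.2) hvw₂.symm hzv.1 ?_ ?_ ?_
  · convert hz₁ using 1
    ext; simp only [mem_insert, mem_singleton]; tauto
  · convert hz₂ using 1
    ext; simp only [mem_insert, mem_singleton]; tauto
  · convert hp using 2
    ext; simp only [mem_insert, mem_singleton]; tauto

noncomputable def pairWeight (H : PDG V) (R : Finset V) : ℝ :=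
  ((Fintype.card V : ℝ) - 2 - H.codegree R) / H.codegree R

lemma IsValid.pairWeight_nonneg (hH : H.IsValid 3) {R : Finset V} (hR : #R = 2) :
    0 ≤ H.pairWeight R := by
  have : (H.codegree R : ℝ) + 2 ≤ Fintype.card V := by exact_mod_cast hH.codegree_add_le hR
  exact div_nonneg (by linarith) (Nat.cast_nonneg _)

lemma codegree_mul_pairWeight_le {R : Finset V} (hR : #R = 2) :
    H.codegree R * H.pairWeight R ≤ Fintype.card V - 2 - H.codegree R := by
  rcases Nat.eq_zero_or_pos (H.codegree R) with h | h
  · have : (2 : ℝ) ≤ Fintype.card V := by exact_mod_cast hR ▸ card_le_univ R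
    simp only [h, Nat.cast_zero, zero_mul]
    linarith
  · rw [pairWeight, mul_div_cancel₀ _ (by positivity)]

lemma IsValid.codegree_add_codegree_le (hH : H.IsValid 3) {R S : Finset V} (hR : #R = 2)
    (hS : #S = 2) (h : Disjoint (H.link R) (H.link S)) :
    H.codegree R + H.codegree S ≤ Fintype.card V := by
  rw [← hH.card_link hR, ← hH.card_link hS, ← card_union_of_disjoint h]
  exact card_le_univ _

lemma IsValid.two_le_sum_pairWeight (hH : H.IsValid 3) (hfree : ¬ (TkPDG 3).IsSubgraph H)
    (hV : 15 ≤ Fintype.card V) {p : Finset V × V} (hp : p ∈ H.dir) :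
    2 ≤ ∑ R ∈ p.1.powersetCard 2, H.pairWeight R := by
  obtain ⟨v, w₁, w₂, hvw₁, hvw₂, hw, rfl⟩ := hH.exists_eq_of_mem_dir hp
  rw [sum_powersetCard_two_triple _ hvw₁ hvw₂ hw]
  have he : {v, w₁, w₂} ∈ H.edges := mem_edges.2 (Or.inr ⟨v, hp⟩)
  have hp' : ({v, w₂, w₁}, v) ∈ H.dir := by rwa [pair_comm]
  have h₁ := hH.codegree_add_codegree_le (card_pair hw) (card_pair hvw₁)
    (disjoint_link_of_mem_dir hfree hvw₁ hvw₂ hw hp)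
  have h₂ := hH.codegree_add_codegree_le (card_pair hw.symm) (card_pair hvw₂)
    (disjoint_link_of_mem_dir hfree hvw₂ hvw₁ hw.symm hp')
  rw [pair_comm w₂] at h₂
  have hpos : ∀ R ⊆ ({v, w₁, w₂} : Finset V), (1 : ℝ) ≤ H.codegree R := fun R hR =>
    Nat.one_le_cast.2 (one_le_codegree_of_subset he hR)
  have key : 2 ≤ H.pairWeight {w₁, w₂} + H.pairWeight {v, w₁} + H.pairWeight {v, w₂} :=
    two_le_div_add_div_add_div (N := Fintype.card V) (by exact_mod_cast hV)
      (hpos _ (by simp)) (hpos _ (by simp [insert_subset_iff]))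
      (hpos _ (by simp [insert_subset_iff])) (by exact_mod_cast h₁) (by exact_mod_cast h₂)
  linarith

lemma IsValid.two_mul_card_dir_le (hH : H.IsValid 3) (hfree : ¬ (TkPDG 3).IsSubgraph H)
    (hV : 15 ≤ Fintype.card V) :
    2 * (#H.dir : ℝ) ≤ ∑ R ∈ univ.powersetCard 2, ((Fintype.card V : ℝ) - 2 - H.codegree R) :=
  calc 2 * (#H.dir : ℝ) = ∑ _p ∈ H.dir, 2 := by rw [sum_const, nsmul_eq_mul, mul_comm]
    _ ≤ ∑ p ∈ H.dir, ∑ R ∈ p.1.powersetCard 2, H.pairWeight R :=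
      sum_le_sum fun p hp => hH.two_le_sum_pairWeight hfree hV hp
    _ = ∑ R ∈ univ.powersetCard 2, #{p ∈ H.dir | R ⊆ p.1} * H.pairWeight R := by
      rw [sum_comm' (t' := univ.powersetCard 2) (s' := fun R => {p ∈ H.dir | R ⊆ p.1})]
      · simp only [sum_const, nsmul_eq_mul]
      · intro p R
        simp only [mem_powersetCard, mem_filter, subset_univ, true_and]
        tauto
    _ ≤ ∑ R ∈ univ.powersetCard 2, H.codegree R * H.pairWeight R := by
      refine sum_le_sum fun R hR => ?_
      have hR := (mem_powersetCard.1 hR).2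
      gcongr
      · exact hH.pairWeight_nonneg hR
      · exact hH.card_filter_dir_le_codegree R
    _ ≤ _ := sum_le_sum fun R hR => codegree_mul_pairWeight_le (mem_powersetCard.1 hR).2

lemma IsValid.sum_sub_codegree (hH : H.IsValid 3) :
    ∑ R ∈ univ.powersetCard 2, ((Fintype.card V : ℝ) - 2 - H.codegree R)
      = 3 * (Fintype.card V).choose 3 - 3 * #H.edges := by
  have hsum : (∑ R ∈ univ.powersetCard 2, H.codegree R : ℝ) = 3 * #H.edges := by
    exact_mod_cast hH.sum_codegree 2
  rw [sum_sub_distrib, sum_const, card_powersetCard, card_univ, nsmul_eq_mul, hsum,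
    Nat.cast_choose_two_mul_sub_two]

theorem IsValid.card_undir_add_card_dir_le (hH : H.IsValid 3)
    (hfree : ¬ (TkPDG 3).IsSubgraph H) (hV : 15 ≤ Fintype.card V) :
    (#H.undir : ℝ) + 5 / 3 * #H.dir ≤ (Fintype.card V).choose 3 := by
  have hedges : (#H.edges : ℝ) = #H.undir + #H.dir := by exact_mod_cast hH.card_edges
  linarith [hH.two_mul_card_dir_le hfree hV, hH.sum_sub_codegree]

end PDG

/-- `π(T_3, 5/3) = 1`: for every `ε > 0` there is `n₀` such that every
`T_3`-free `3`-PDG on `n ≥ n₀` vertices satisfies `e_u(H) + (5/3)·e_d(H) ≤ (1+ε)·C(n,3)`. -/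
theorem turan_T3 (ε : ℝ) (hε : 0 < ε) :
    ∃ n₀ : ℕ, ∀ n ≥ n₀, ∀ H : PDG (Fin n),
      H.IsValid 3 → ¬ (TkPDG 3).IsSubgraph H →
      (H.undir.card : ℝ) + (5 / 3) * H.dir.card ≤ (1 + ε) * n.choose 3 := by
  refine ⟨15, fun n hn H hH hfree => ?_⟩
  have hbound := hH.card_undir_add_card_dir_le hfree (by rwa [Fintype.card_fin])
  rw [Fintype.card_fin] at hbound
  nlinarith [mul_nonneg hε.le (Nat.cast_nonneg (α := ℝ) (n.choose 3))]
end

section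
/- Let k ≥ 4 be an integer, and set θ = 1 + 1/√2, a = 1/√2, b = k/2 − 1/√2. Let F be a T_k-free partially directed k-graph on k+1 vertices, and let (x_1,…,x_{k−1}, y, z) be a uniformly random ordering of its k+1 vertices. Let [xy] denote the event that {x_1,…,x_{k−1},y} forms an undirected edge of F, let [x̌y] denote the event that {x_1,…,x_{k−1},y} forms an edge of F directed toward y, and let [x y-none] denote the event that {x_1,…,x_{k−1},y} supports no edge of F; define [x̌z] and [x z-none] analogously with z in place of y. Then P([xy]) + kθ·P([x̌y]) + a²·P([x y-none] ∧ [x z-none]) − 2ab·P([x y-none] ∧ [x̌z]) + b²·P([x̌y] ∧ [x̌z]) ≤ 1. -/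
/-- Probability of an event over a uniformly random ordering of the `k+1` vertices. -/
noncomputable def permProb (k : ℕ) (p : Equiv.Perm (Fin (k + 1)) → Prop) : ℝ :=
  (Set.ncard {σ : Equiv.Perm (Fin (k + 1)) | p σ} : ℝ) / (Nat.factorial (k + 1))

/-- The set `x = {x_1, …, x_{k−1}}`: images of the first `k−1` positions. -/
def xSet (k : ℕ) (σ : Equiv.Perm (Fin (k + 1))) : Finset (Fin (k + 1)) :=
  (Finset.univ.filter (fun i : Fin (k + 1) => (i : ℕ) < k - 1)).image σ

/-- The vertex `y`: image of position `k−1`. -/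
def yVtx (k : ℕ) (σ : Equiv.Perm (Fin (k + 1))) : Fin (k + 1) := σ ⟨k - 1, by omega⟩

/-- The vertex `z`: image of position `k`. -/
def zVtx (k : ℕ) (σ : Equiv.Perm (Fin (k + 1))) : Fin (k + 1) := σ ⟨k, Nat.lt_succ_self k⟩

/-- There is no edge (undirected or directed) of `F` on the vertex set `S`. -/
def NoEdgeOn {V : Type*} (F : PDG V) (S : Finset V) : Prop :=
  S ∉ F.undir ∧ ∀ v, (S, v) ∉ F.dir

/-!
On `k + 1` vertices every `k`-set is the complement of a single vertex, and for a uniformly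
random ordering `(x, y, z)` the pair `(y, z)` is a uniformly random ordered pair of distinct
vertices, with `x ∪ {y}` the complement of `z` and `x ∪ {z}` the complement of `y`. So every
probability is a count of ordered pairs divided by `(k + 1) k`, and these counts are governed by
how many vertices have an undirected (`u`), directed (`d`) or no (`n`) edge on their complement.

Since `kθ - 2ab = k + 1`, if every directed edge points to a vertex with empty complement the
left side becomes `(u k + (k + 1) d + n (n - 1) / 2) / ((k + 1) k)`, which is at most `1` because
`d > 0` forces `n ≥ 1`. Otherwise some edge on the complement of `r` points to a vertex `w` whose
complement carries an edge; a third such vertex would complete a copy of `T_k`, so `u + d = 2`,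
`n = k - 1`, and the two cases `d = 1, 2` are checked directly (the second one needs `k ≥ 4`).
-/

open Finset

section PermutationPairs

variable {α : Type*} [Fintype α] [DecidableEq α]

theorem card_perm_apply_eq_pair {i j y z : α} (hij : i ≠ j) (hyz : y ≠ z) :
    #{σ : Equiv.Perm α | σ i = y ∧ σ j = z} = #{σ : Equiv.Perm α | σ i = i ∧ σ j = j} := by
  obtain ⟨τ, hτi, hτj⟩ :=
    MulAction.is_two_pretransitive_iff.mp (Equiv.Perm.isMultiplyPretransitive α 2) hij hyz
  rw [Equiv.Perm.smul_def] at hτi hτj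
  refine card_nbij' (τ⁻¹ * ·) (τ * ·) ?_ ?_ (fun σ _ => by simp) (fun σ _ => by simp)
  · intro σ
    simp +contextual [← hτi, ← hτj]
  · intro σ
    simp +contextual [hτi, hτj]

theorem card_perm_filter_apply_pair {i j : α} (hij : i ≠ j) (q : α → α → Prop)
    [DecidableRel q] :
    #{σ : Equiv.Perm α | q (σ i) (σ j)} =
      #{p : α × α | p.1 ≠ p.2 ∧ q p.1 p.2} * #{σ : Equiv.Perm α | σ i = i ∧ σ j = j} := by
  rw [card_eq_sum_card_fiberwise (f := fun σ : Equiv.Perm α => (σ i, σ j))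
    (t := {p : α × α | p.1 ≠ p.2 ∧ q p.1 p.2}), ← smul_eq_mul, ← sum_const]
  · refine sum_congr rfl fun ⟨y, z⟩ hyz => ?_
    rw [mem_filter] at hyz
    rw [← card_perm_apply_eq_pair hij hyz.2.1, filter_filter]
    congr 1
    refine filter_congr fun σ _ => ?_
    constructor
    · rintro ⟨-, h⟩; simpa using h
    · rintro ⟨rfl, rfl⟩; exact ⟨hyz.2.2, rfl⟩
  · intro σ hσ
    simp only [coe_filter, mem_univ, true_and] at hσ ⊢
    exact ⟨σ.injective.ne hij, hσ⟩

theorem card_perm_filter_apply_pair_mul {i j : α} (hij : i ≠ j) (q : α → α → Prop)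
    [DecidableRel q] :
    #{σ : Equiv.Perm α | q (σ i) (σ j)} * (Fintype.card α * (Fintype.card α - 1)) =
      #{p : α × α | p.1 ≠ p.2 ∧ q p.1 p.2} * (Fintype.card α).factorial := by
  have hpairs : #{p : α × α | p.1 ≠ p.2} = Fintype.card α * (Fintype.card α - 1) := by
    have : ({p : α × α | p.1 ≠ p.2} : Finset _) = univ.offDiag := by ext; simp
    rw [this, offDiag_card, card_univ, Nat.mul_sub_one]
  have htotal := card_perm_filter_apply_pair hij (fun _ _ => True)
  simp only [filter_true, card_univ, Fintype.card_perm, and_true, hpairs] at htotal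
  rw [htotal, card_perm_filter_apply_pair hij q]
  ring

end PermutationPairs

section Orderings

variable {k : ℕ}

theorem insert_yVtx_xSet (hk : 1 ≤ k) (σ : Equiv.Perm (Fin (k + 1))) :
    insert (yVtx k σ) (xSet k σ) = univ.erase (zVtx k σ) := by
  have hpos : insert (⟨k - 1, by omega⟩ : Fin (k + 1))
      (univ.filter fun i : Fin (k + 1) => (i : ℕ) < k - 1) =
      (univ : Finset (Fin (k + 1))).erase ⟨k, k.lt_succ_self⟩ := by
    ext i
    simp only [mem_insert, Fin.ext_iff, mem_filter, mem_univ, true_and, mem_erase, ne_eq, and_true]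
    omega
  rw [yVtx, xSet, ← image_insert, hpos, image_erase σ.injective, image_univ_equiv, zVtx]

theorem insert_zVtx_xSet (hk : 1 ≤ k) (σ : Equiv.Perm (Fin (k + 1))) :
    insert (zVtx k σ) (xSet k σ) = univ.erase (yVtx k σ) := by
  have hpos : insert (⟨k, k.lt_succ_self⟩ : Fin (k + 1))
      (univ.filter fun i : Fin (k + 1) => (i : ℕ) < k - 1) =
      (univ : Finset (Fin (k + 1))).erase ⟨k - 1, by omega⟩ := by
    ext i
    simp only [mem_insert, Fin.ext_iff, mem_filter, mem_univ, true_and, mem_erase, ne_eq, and_true]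
    omega
  rw [zVtx, xSet, ← image_insert, hpos, image_erase σ.injective, image_univ_equiv, yVtx]

theorem permProb_yVtx_zVtx (hk : 1 ≤ k) (q : Fin (k + 1) → Fin (k + 1) → Prop) :
    permProb k (fun σ => q (yVtx k σ) (zVtx k σ)) =
      {p : Fin (k + 1) × Fin (k + 1) | p.1 ≠ p.2 ∧ q p.1 p.2}.ncard / ((k + 1) * k) := by
  classical
  have hyz : (⟨k - 1, by omega⟩ : Fin (k + 1)) ≠ ⟨k, k.lt_succ_self⟩ :=
    Fin.ne_of_val_ne (by dsimp only; omega)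
  have hcount := card_perm_filter_apply_pair_mul hyz q
  simp only [Fintype.card_fin, Nat.add_sub_cancel] at hcount
  rw [permProb, ← coe_filter_univ, ← coe_filter_univ, Set.ncard_coe_finset, Set.ncard_coe_finset,
    div_eq_div_iff (by positivity) (by positivity)]
  exact_mod_cast hcount

end Orderings

theorem ncard_pairs_ne_snd_mem {V : Type*} [Fintype V] [DecidableEq V] (S : Finset V) :
    {p : V × V | p.1 ≠ p.2 ∧ p.2 ∈ S}.ncard = #S * (Fintype.card V - 1) := by
  rw [← coe_filter_univ, Set.ncard_coe_finset,
    card_eq_sum_card_fiberwise (f := Prod.snd) (t := S) (fun p hp => (mem_filter.mp hp).2.2),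
    ← smul_eq_mul, ← sum_const]
  refine sum_congr rfl fun z _ => ?_
  rw [← card_univ, ← card_erase_of_mem (mem_univ z)]
  refine card_nbij' Prod.fst (·, z) ?_ ?_ (fun p hp => ?_) (fun _ _ => rfl)
  · intro p hp
    simp only [coe_filter, mem_filter, mem_univ, true_and, Set.mem_ofPred_eq] at hp
    simpa [← hp.2] using hp.1.1
  · intro y hy
    simp_all
  · simp only [coe_filter, mem_filter, mem_univ, true_and, Set.mem_ofPred_eq] at hp
    rw [← hp.2]

theorem ncard_pairs_ne_mem_mem {V : Type*} (S : Finset V) :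
    {p : V × V | p.1 ≠ p.2 ∧ p.2 ∈ S ∧ p.1 ∈ S}.ncard = #S * #S - #S := by
  rw [← offDiag_card, ← Set.ncard_coe_finset, coe_offDiag]
  congr 1
  ext p
  simp only [Set.mem_ofPred_eq, Set.mem_offDiag, mem_coe]
  tauto

namespace PDG

variable {V : Type*} [Fintype V] [DecidableEq V] (F : PDG V)

def undirOpp : Finset V := {v | univ.erase v ∈ F.undir}

def dirOpp : Finset V := {v | ∃ w, (univ.erase v, w) ∈ F.dir}

def emptyOpp : Finset V := univ \ (F.undirOpp ∪ F.dirOpp)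

def HeadsEmpty : Prop := ∀ r w, (univ.erase r, w) ∈ F.dir → w ∈ F.emptyOpp

variable {F}

theorem mem_undirOpp {v : V} : v ∈ F.undirOpp ↔ univ.erase v ∈ F.undir := by
  simp [undirOpp]

theorem mem_dirOpp {v : V} : v ∈ F.dirOpp ↔ ∃ w, (univ.erase v, w) ∈ F.dir := by
  simp [dirOpp]

theorem mem_emptyOpp {v : V} : v ∈ F.emptyOpp ↔ NoEdgeOn F (univ.erase v) := by
  simp [emptyOpp, undirOpp, dirOpp, NoEdgeOn]

theorem notMem_emptyOpp {v : V} :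
    v ∉ F.emptyOpp ↔ univ.erase v ∈ F.undir ∨ ∃ u, (univ.erase v, u) ∈ F.dir := by
  simp [emptyOpp, undirOpp, dirOpp, or_iff_not_imp_left]

theorem ne_of_mem_dir {k : ℕ} (hval : F.IsValid k) {r w : V} (h : (univ.erase r, w) ∈ F.dir) :
    w ≠ r :=
  (mem_erase.mp (hval.2.1 _ h).2).1

theorem disjoint_undirOpp_dirOpp {k : ℕ} (hval : F.IsValid k) :
    Disjoint F.undirOpp F.dirOpp := by
  refine disjoint_left.mpr fun v hu hd => ?_
  obtain ⟨w, hw⟩ := mem_dirOpp.mp hd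
  exact hval.2.2.1 _ hw (mem_undirOpp.mp hu)

theorem card_undirOpp_add_card_dirOpp_add_card_emptyOpp {k : ℕ} (hval : F.IsValid k) :
    #F.undirOpp + #F.dirOpp + #F.emptyOpp = Fintype.card V := by
  have hunion := card_union_of_disjoint (disjoint_undirOpp_dirOpp hval)
  have hle := card_le_univ (F.undirOpp ∪ F.dirOpp)
  rw [emptyOpp, card_sdiff_of_subset (subset_univ _), hunion, card_univ]
  omega

theorem ncard_pairs_dir {k : ℕ} (hval : F.IsValid k) :
    {p : V × V | p.1 ≠ p.2 ∧ (univ.erase p.2, p.1) ∈ F.dir}.ncard = #F.dirOpp := by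
  have himage : Prod.snd '' {p : V × V | p.1 ≠ p.2 ∧ (univ.erase p.2, p.1) ∈ F.dir} =
      F.dirOpp := by
    ext v
    simp only [Set.mem_image, Set.mem_ofPred_eq, Prod.exists, exists_eq_right, mem_coe,
      mem_dirOpp]
    exact ⟨fun ⟨w, _, hw⟩ => ⟨w, hw⟩, fun ⟨w, hw⟩ => ⟨w, ne_of_mem_dir hval hw, hw⟩⟩
  have hinj : Set.InjOn Prod.snd {p : V × V | p.1 ≠ p.2 ∧ (univ.erase p.2, p.1) ∈ F.dir} :=
    fun p hp q hq h => Prod.ext (congrArg Prod.snd (hval.2.2.2 _ hp.2 _ hq.2 (by rw [h]))) h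
  rw [← Set.ncard_coe_finset, ← himage, hinj.ncard_image]

theorem ncard_pairs_dir_dir_le :
    {p : V × V | p.1 ≠ p.2 ∧ (univ.erase p.2, p.1) ∈ F.dir ∧
      (univ.erase p.1, p.2) ∈ F.dir}.ncard ≤ #F.dirOpp * #F.dirOpp - #F.dirOpp := by
  rw [← offDiag_card, ← Set.ncard_coe_finset, coe_offDiag]
  refine Set.ncard_le_ncard (fun p hp => ?_)
  simp only [Set.mem_ofPred_eq, Set.mem_offDiag, mem_coe, mem_dirOpp] at hp ⊢
  exact ⟨⟨_, hp.2.2⟩, ⟨_, hp.2.1⟩, hp.1⟩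

theorem HeadsEmpty.ncard_pairs_emptyOpp_dir (hA : F.HeadsEmpty) {k : ℕ} (hval : F.IsValid k) :
    {p : V × V | p.1 ≠ p.2 ∧ p.2 ∈ F.emptyOpp ∧ (univ.erase p.1, p.2) ∈ F.dir}.ncard =
      #F.dirOpp := by
  rw [← ncard_pairs_dir hval, ← Set.ncard_image_of_injective _ Prod.swap_injective,
    Set.image_swap_eq_preimage_swap]
  congr 1
  ext ⟨y, z⟩
  simp only [Set.mem_ofPred_eq, Set.mem_preimage, Prod.swap_prod_mk]
  exact ⟨fun h => ⟨h.1.symm, h.2.2⟩, fun h => ⟨h.1.symm, hA _ _ h.2, h.2⟩⟩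

theorem HeadsEmpty.ncard_pairs_dir_dir_eq_zero (hA : F.HeadsEmpty) :
    {p : V × V | p.1 ≠ p.2 ∧ (univ.erase p.2, p.1) ∈ F.dir ∧
      (univ.erase p.1, p.2) ∈ F.dir}.ncard = 0 := by
  rw [Set.ncard_eq_zero]
  refine Set.eq_empty_of_forall_notMem fun p hp => ?_
  have := hA _ _ hp.2.1
  simp only [emptyOpp, mem_sdiff, mem_union, mem_dirOpp] at this
  exact this.2 (Or.inr ⟨_, hp.2.2⟩)

theorem HeadsEmpty.emptyOpp_nonempty (hA : F.HeadsEmpty) (hd : F.dirOpp.Nonempty) :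
    F.emptyOpp.Nonempty := by
  obtain ⟨r, hr⟩ := hd
  obtain ⟨w, hw⟩ := mem_dirOpp.mp hr
  exact ⟨w, hA r w hw⟩

end PDG

theorem vecCons_three_injective {α : Type*} {a b c : α} (hab : a ≠ b) (hac : a ≠ c)
    (hbc : b ≠ c) : Function.Injective ![a, b, c] := by
  intro i j h
  fin_cases i <;> fin_cases j <;> simp_all [eq_comm]

theorem TkPDG_isSubgraph_of_mem_dir {k : ℕ} (hk : 2 ≤ k) {F : PDG (Fin (k + 1))}
    {r w v : Fin (k + 1)} (hrw : (univ.erase r, w) ∈ F.dir) (hw : w ∉ F.emptyOpp)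
    (hv : v ∉ F.emptyOpp) (hwr : w ≠ r) (hvr : v ≠ r) (hvw : v ≠ w) :
    (TkPDG k).IsSubgraph F := by
  obtain ⟨φ, hφ⟩ := Equiv.Perm.exists_extending_pair
    ![⟨k, k.lt_succ_self⟩, ⟨k - 2, by omega⟩, ⟨k - 1, by omega⟩] ![w, v, r]
    (vecCons_three_injective (Fin.ne_of_val_ne (by dsimp only; omega))
      (Fin.ne_of_val_ne (by dsimp only; omega)) (Fin.ne_of_val_ne (by dsimp only; omega)))
    (vecCons_three_injective hvw.symm hwr hvr)
  have hφk : φ ⟨k, k.lt_succ_self⟩ = w := hφ 0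
  have hφk₂ : φ ⟨k - 2, by omega⟩ = v := hφ 1
  have hφk₁ : φ ⟨k - 1, by omega⟩ = r := hφ 2
  have himage : ∀ x, (univ.erase x).image φ = univ.erase (φ x) := fun x => by
    rw [image_erase φ.injective, image_univ_equiv]
  refine ⟨φ, φ.injective, fun e he => ?_, fun p hp => ?_⟩
  · simp only [TkPDG, mem_insert, mem_singleton] at he
    rcases he with rfl | rfl
    · rw [himage, hφk]; exact PDG.notMem_emptyOpp.mp hw
    · rw [himage, hφk₂]; exact PDG.notMem_emptyOpp.mp hv
  · simp only [TkPDG, mem_singleton] at hp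
    subst hp
    rw [himage, hφk₁, hφk]
    exact hrw

theorem PDG.undirOpp_union_dirOpp_eq_pair {k : ℕ} (hk : 2 ≤ k) {F : PDG (Fin (k + 1))}
    (hval : F.IsValid k) (hfree : ¬ (TkPDG k).IsSubgraph F) {r w : Fin (k + 1)}
    (hrw : (univ.erase r, w) ∈ F.dir) (hw : w ∉ F.emptyOpp) :
    F.undirOpp ∪ F.dirOpp = {r, w} := by
  have hwr := ne_of_mem_dir hval hrw
  ext v
  rw [mem_insert, mem_singleton]
  constructor
  · intro hv
    by_contra! hvrw
    have hv' : v ∉ F.emptyOpp := by simpa [emptyOpp, or_iff_not_imp_left] using hv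
    exact hfree (TkPDG_isSubgraph_of_mem_dir hk hrw hw hv' hwr hvrw.1 hvrw.2)
  · rintro (rfl | rfl)
    · exact mem_union_right _ (mem_dirOpp.mpr ⟨w, hrw⟩)
    · simpa [emptyOpp, or_iff_not_imp_left] using hw

section Arithmetic

variable {k u d n c₄ c₅ a : ℝ}

theorem flag_numerator_le_of_headsEmpty (ha : a ^ 2 = 1 / 2) (hk : 0 ≤ k)
    (hsum : u + d + n = k + 1) (hu : 0 ≤ u) (hd : 0 ≤ d) (hn₀ : 0 ≤ n) (hn : d = 0 ∨ 1 ≤ n) :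
    u * k + k * (1 + a) * d + a ^ 2 * (n * n - n) - 2 * a * (k / 2 - a) * d
      ≤ (k + 1) * k := by
  have hsimp : k * (1 + a) * d + a ^ 2 * (n * n - n) - 2 * a * (k / 2 - a) * d
      = (k + 1) * d + (n * n - n) / 2 := by
    linear_combination (n * n - n + 2 * d) * ha
  rcases hn with rfl | hn
  · nlinarith [mul_nonneg hn₀ (show 0 ≤ 2 * k + 1 - n by linarith)]
  · nlinarith [mul_nonneg (show 0 ≤ n - 1 by linarith) (show 0 ≤ 2 * k + 2 - n by linarith)]

theorem flag_numerator_le_of_two_edges (ha : a ^ 2 = 1 / 2) (ha₀ : 0 ≤ a) (hk : 4 ≤ k)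
    (hn : n = k - 1) (hc₄ : 0 ≤ c₄)
    (hd : d = 1 ∧ u = 1 ∧ c₅ = 0 ∨ d = 2 ∧ u = 0 ∧ c₅ ≤ 2) :
    u * k + k * (1 + a) * d + a ^ 2 * (n * n - n) - 2 * a * (k / 2 - a) * c₄
      + (k / 2 - a) ^ 2 * c₅ ≤ (k + 1) * k := by
  subst hn
  have hquad : a ^ 2 * ((k - 1) * (k - 1) - (k - 1)) = ((k - 1) * (k - 1) - (k - 1)) / 2 := by
    rw [ha]; ring
  have hdrop : 0 ≤ 2 * a * (k / 2 - a) * c₄ := by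
    have : a ≤ 1 := by nlinarith
    have : 0 ≤ k / 2 - a := by linarith
    positivity
  rcases hd with ⟨rfl, rfl, rfl⟩ | ⟨rfl, rfl, hc₅⟩
  · nlinarith
  · have hb : (k / 2 - a) ^ 2 * 2 = k ^ 2 / 2 - 2 * k * a + 1 := by
      linear_combination 2 * ha
    nlinarith [mul_le_mul_of_nonneg_left hc₅ (sq_nonneg (k / 2 - a))]

end Arithmetic

theorem flag_count_bound {k u d n c₄ c₅ : ℕ} (hk : 4 ≤ k) (hsum : u + d + n = k + 1)
    (hcases : (c₄ = d ∧ c₅ = 0 ∧ (0 < d → 0 < n)) ∨ (u + d = 2 ∧ 0 < d ∧ c₅ ≤ d * d - d)) :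
    ((u * k : ℕ) : ℝ) / ((k + 1) * k) + k * (1 + 1 / √2) * ((d : ℝ) / ((k + 1) * k)) +
      (1 / √2) ^ 2 * (((n * n - n : ℕ) : ℝ) / ((k + 1) * k)) -
      2 * (1 / √2) * (k / 2 - 1 / √2) * ((c₄ : ℝ) / ((k + 1) * k)) +
      (k / 2 - 1 / √2) ^ 2 * ((c₅ : ℝ) / ((k + 1) * k)) ≤ 1 := by
  set a : ℝ := 1 / √2 with ha_def
  have ha : a ^ 2 = 1 / 2 := by rw [ha_def, div_pow, one_pow, Real.sq_sqrt zero_le_two]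
  have hkR : (4 : ℝ) ≤ k := by exact_mod_cast hk
  have hsumR : (u : ℝ) + d + n = k + 1 := by exact_mod_cast hsum
  have hnum : (u : ℝ) * k + k * (1 + a) * d + a ^ 2 * (n * n - n) - 2 * a * (k / 2 - a) * c₄
      + (k / 2 - a) ^ 2 * c₅ ≤ (k + 1) * k := by
    rcases hcases with ⟨rfl, rfl, hn⟩ | ⟨hud, hd, hc₅⟩
    · rw [Nat.cast_zero, mul_zero, add_zero]
      refine flag_numerator_le_of_headsEmpty ha (by positivity) hsumR (by positivity)
        (by positivity) (by positivity) ?_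
      rcases Nat.eq_zero_or_pos c₄ with h | h
      · exact Or.inl (by exact_mod_cast h)
      · exact Or.inr (by exact_mod_cast hn h)
    · have hudR : (u : ℝ) + d = 2 := by exact_mod_cast hud
      refine flag_numerator_le_of_two_edges ha (by positivity) hkR (by linarith)
        (by positivity) ?_
      obtain ⟨rfl, rfl⟩ | ⟨rfl, rfl⟩ : d = 1 ∧ u = 1 ∨ d = 2 ∧ u = 0 := by omega
      · exact Or.inl ⟨by simp, by simp, by exact_mod_cast (by omega : c₅ = 0)⟩
      · exact Or.inr ⟨by simp, by simp, by exact_mod_cast (by omega : c₅ ≤ 2)⟩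
  have hM : (0 : ℝ) < (k + 1) * k := by positivity
  refine le_of_eq_of_le ?_ ((div_le_one hM).2 hnum)
  rw [Nat.cast_sub (Nat.le_mul_self n)]
  push_cast
  ring

/-- Let `k ≥ 4`, `θ = 1 + 1/√2`, `a = 1/√2`, `b = k/2 − 1/√2`, and let `F` be
a `T_k`-free `k`-PDG on `k+1` vertices. Over a uniformly random ordering
`(x_1, …, x_{k−1}, y, z)` of the vertices of `F`:
`P(xy) + kθ·P(x̌y) + a²·P(xy-none ∧ xz-none) − 2ab·P(xy-none ∧ x̌z) + b²·P(x̌y ∧ x̌z) ≤ 1`. -/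
theorem flag_inequality (k : ℕ) (hk : 4 ≤ k) (F : PDG (Fin (k + 1)))
    (hval : F.IsValid k) (hfree : ¬ (TkPDG k).IsSubgraph F) :
    permProb k (fun σ => insert (yVtx k σ) (xSet k σ) ∈ F.undir)
      + k * (1 + 1 / Real.sqrt 2) *
        permProb k (fun σ => (insert (yVtx k σ) (xSet k σ), yVtx k σ) ∈ F.dir)
      + (1 / Real.sqrt 2) ^ 2 *
        permProb k (fun σ => NoEdgeOn F (insert (yVtx k σ) (xSet k σ)) ∧
          NoEdgeOn F (insert (zVtx k σ) (xSet k σ)))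
      - 2 * (1 / Real.sqrt 2) * ((k : ℝ) / 2 - 1 / Real.sqrt 2) *
        permProb k (fun σ => NoEdgeOn F (insert (yVtx k σ) (xSet k σ)) ∧
          (insert (zVtx k σ) (xSet k σ), zVtx k σ) ∈ F.dir)
      + ((k : ℝ) / 2 - 1 / Real.sqrt 2) ^ 2 *
        permProb k (fun σ => (insert (yVtx k σ) (xSet k σ), yVtx k σ) ∈ F.dir ∧
          (insert (zVtx k σ) (xSet k σ), zVtx k σ) ∈ F.dir)
      ≤ 1 := by
  have hk1 : 1 ≤ k := by omega
  simp only [insert_yVtx_xSet hk1, insert_zVtx_xSet hk1, ← PDG.mem_undirOpp, ← PDG.mem_emptyOpp]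
  rw [permProb_yVtx_zVtx hk1 (fun _ z => z ∈ F.undirOpp),
    permProb_yVtx_zVtx hk1 (fun y z => (univ.erase z, y) ∈ F.dir),
    permProb_yVtx_zVtx hk1 (fun y z => z ∈ F.emptyOpp ∧ y ∈ F.emptyOpp),
    permProb_yVtx_zVtx hk1 (fun y z => z ∈ F.emptyOpp ∧ (univ.erase y, z) ∈ F.dir),
    permProb_yVtx_zVtx hk1 (fun y z => (univ.erase z, y) ∈ F.dir ∧ (univ.erase y, z) ∈ F.dir),
    ncard_pairs_ne_snd_mem, PDG.ncard_pairs_dir hval, ncard_pairs_ne_mem_mem,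
    Fintype.card_fin, Nat.add_sub_cancel]
  have hsum := PDG.card_undirOpp_add_card_dirOpp_add_card_emptyOpp hval
  rw [Fintype.card_fin] at hsum
  by_cases hA : F.HeadsEmpty
  · rw [hA.ncard_pairs_emptyOpp_dir hval, hA.ncard_pairs_dir_dir_eq_zero]
    exact flag_count_bound hk hsum (Or.inl ⟨rfl, rfl,
      fun hd => card_pos.2 (hA.emptyOpp_nonempty (card_pos.1 hd))⟩)
  · obtain ⟨r, w, hrw, hw⟩ : ∃ r w, (univ.erase r, w) ∈ F.dir ∧ w ∉ F.emptyOpp := by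
      simpa [PDG.HeadsEmpty] using hA
    refine flag_count_bound hk hsum (Or.inr ⟨?_, card_pos.2 ⟨r, PDG.mem_dirOpp.2 ⟨w, hrw⟩⟩,
      PDG.ncard_pairs_dir_dir_le⟩)
    rw [← card_union_of_disjoint (PDG.disjoint_undirOpp_dirOpp hval),
      PDG.undirOpp_union_dirOpp_eq_pair (by omega) hval hfree hrw hw,
      card_pair (PDG.ne_of_mem_dir hval hrw).symm]
end

section
/- Fix an integer k ≥ 2. For every ε > 0 and every k-SAT formula F, there exist δ > 0 and n₀ such that for all n > n₀: if a k-SAT formula G on n variables contains at least ε·n^{v(F)} copies of F, then G contains at least δ·n^{2·v(F)} copies of the 2-blowup F[2]. -/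
/-!
Call a map of the `v` variables of `F` into `[n]` a homomorphism if it sends every clause of `F`
to a clause of `G`; every copy of `F` comes from one, so there are at least `ε n^v` of them. A box
is a pair of maps `a, b : [v] → [n]`, and it is good if all `2^v` maps mixing `a` and `b`
coordinatewise are homomorphisms. Splitting off one coordinate at a time with Cauchy–Schwarz and
the power mean inequality gives, by induction on `v`, at least `ε^{2^v} n^{2v}` good boxes, and
only `O(n^{2v-1})` boxes take fewer than `2v` distinct values. A good box with `2v` distinct
values labels the variables of `F[2]` injectively, and since every clause of `F[2]` picks one
duplicate of each of its variables, it is a mixture of a clause of `F`: the box is a copy of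
`F[2]` in `G`. Each copy arises from at most `(2v)^{2v}` boxes.
-/

open Finset Function

@[to_additive]
lemma prod_fin_succ_pi {β M : Type*} [Fintype β] [CommMonoid M] {v : ℕ}
    (f : (Fin (v + 1) → β) → M) :
    ∏ x, f x = ∏ a, ∏ y : Fin v → β, f (Fin.cons a y) := by
  rw [← Fintype.prod_prod_type']
  exact (Fintype.prod_equiv (Fin.consEquiv fun _ => β) _ _ fun _ => rfl).symm

section Box

variable {α ι : Type*} [Fintype α] [Fintype ι] [DecidableEq ι]

-- `h i 0` and `h i 1` are the two sides of the box in coordinate `i`; `σ` picks a corner.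
def boxSum (f : (ι → α) → ℝ) : ℝ :=
  ∑ h : ι → Fin 2 → α, ∏ σ : ι → Fin 2, f fun i => h i (σ i)

lemma boxSum_fin_succ {v : ℕ} (f : (Fin (v + 1) → α) → ℝ) :
    boxSum f = ∑ h₀ : Fin 2 → α, boxSum fun y => ∏ j, f (Fin.cons (h₀ j) y) := by
  unfold boxSum
  rw [sum_fin_succ_pi]
  refine sum_congr rfl fun h₀ _ => sum_congr rfl fun h _ => ?_
  rw [prod_fin_succ_pi, prod_comm]
  refine prod_congr rfl fun σ _ => prod_congr rfl fun j _ => congrArg f ?_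
  funext i
  cases i using Fin.cases <;> rfl

lemma sum_pow_mul_le_boxSum_fin (v : ℕ) (f : (Fin v → α) → ℝ) (hf : ∀ x, 0 ≤ f x) :
    (∑ x, f x) ^ 2 ^ v * (Fintype.card α : ℝ) ^ (2 * v) ≤
      boxSum f * (Fintype.card α : ℝ) ^ (v * 2 ^ v) := by
  induction v with
  | zero =>
    simp only [boxSum, Fintype.sum_unique, Fintype.prod_unique]
    simp [Subsingleton.elim (fun i : Fin 0 => _) default]
  | succ v ih =>
    set N : ℝ := (Fintype.card α : ℝ)
    set g : (Fin 2 → α) → (Fin v → α) → ℝ := fun h₀ y =>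
      ∏ j, f (Fin.cons (h₀ j) y)
    have hg : ∀ h₀ y, 0 ≤ g h₀ y := fun _ _ => prod_nonneg fun _ _ => hf _
    set c : (Fin v → α) → ℝ := fun y => ∑ a, f (Fin.cons a y)
    obtain ⟨m, hm⟩ : ∃ m, 2 ^ v = m + 1 :=
      ⟨2 ^ v - 1, by have := Nat.one_le_two_pow (n := v); omega⟩
    have hsum : ∑ x, f x = ∑ y, c y := by rw [sum_fin_succ_pi, sum_comm]
    have hsq : ∑ y, c y ^ 2 = ∑ h₀, ∑ y, g h₀ y := by
      rw [sum_comm]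
      exact sum_congr rfl fun y _ => Fintype.sum_pow _ 2
    have cauchy_schwarz : (∑ y, c y) ^ 2 ≤ N ^ v * ∑ y, c y ^ 2 := by
      simpa [N] using sq_sum_le_card_mul_sum_sq (s := univ) (f := c)
    have power_mean :
        (∑ h₀, ∑ y, g h₀ y) ^ (m + 1) ≤ (N ^ 2) ^ m * ∑ h₀, (∑ y, g h₀ y) ^ (m + 1) := by
      simpa [N] using pow_sum_le_card_mul_sum_pow (s := univ)
        (fun h₀ _ => sum_nonneg fun y _ => hg h₀ y) m
    have ih_summed : (∑ h₀, (∑ y, g h₀ y) ^ (m + 1)) * N ^ (2 * v) ≤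
        (∑ h₀, boxSum (g h₀)) * N ^ (v * (m + 1)) := by
      rw [sum_mul, sum_mul]
      exact sum_le_sum fun h₀ _ => hm ▸ ih (g h₀) (hg h₀)
    rw [boxSum_fin_succ, pow_succ, hm, pow_mul', hsum]
    calc ((∑ y, c y) ^ 2) ^ (m + 1) * N ^ (2 * (v + 1))
        ≤ (N ^ v * ∑ y, c y ^ 2) ^ (m + 1) * N ^ (2 * (v + 1)) := by gcongr
      _ = N ^ (v * (m + 1)) * N ^ 2 * ((∑ h₀, ∑ y, g h₀ y) ^ (m + 1) * N ^ (2 * v)) := by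
        rw [hsq]; ring
      _ ≤ N ^ (v * (m + 1)) * N ^ 2 *
            (((N ^ 2) ^ m * ∑ h₀, (∑ y, g h₀ y) ^ (m + 1)) * N ^ (2 * v)) := by
        gcongr
      _ ≤ N ^ (v * (m + 1)) * N ^ 2 *
            ((N ^ 2) ^ m * ((∑ h₀, boxSum (g h₀)) * N ^ (v * (m + 1)))) := by
        rw [mul_assoc ((N ^ 2) ^ m)]; gcongr
      _ = (∑ h₀, boxSum (g h₀)) * N ^ ((v + 1) * ((m + 1) * 2)) := by ring

lemma sum_pow_mul_le_boxSum (f : (ι → α) → ℝ) (hf : ∀ x, 0 ≤ f x) :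
    (∑ x, f x) ^ 2 ^ Fintype.card ι * (Fintype.card α : ℝ) ^ (2 * Fintype.card ι) ≤
      boxSum f * (Fintype.card α : ℝ) ^ (Fintype.card ι * 2 ^ Fintype.card ι) := by
  set e := Fintype.equivFin ι
  set f' : (Fin (Fintype.card ι) → α) → ℝ := fun y => f (y ∘ e)
  have hsum : ∑ x, f x = ∑ y, f' y :=
    Fintype.sum_equiv (e.arrowCongr (Equiv.refl α)) _ _ fun x => by
      simp [f', Function.comp_def]
  have hbox : boxSum f = boxSum f' :=
    Fintype.sum_equiv (e.arrowCongr (Equiv.refl _)) _ _ fun h =>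
      Fintype.prod_equiv (e.arrowCongr (Equiv.refl _)) _ _ fun σ => by
        simp [f', Function.comp_def]
  rw [hsum, hbox]
  exact sum_pow_mul_le_boxSum_fin _ f' fun _ => hf _

variable [DecidableEq α]

def boxes (E : Finset (ι → α)) : Finset (ι → Fin 2 → α) :=
  univ.filter fun h => ∀ σ : ι → Fin 2, (fun i => h i (σ i)) ∈ E

lemma card_pow_mul_le_card_boxes (E : Finset (ι → α)) :
    (#E : ℝ) ^ 2 ^ Fintype.card ι * (Fintype.card α : ℝ) ^ (2 * Fintype.card ι) ≤
      #(boxes E) * (Fintype.card α : ℝ) ^ (Fintype.card ι * 2 ^ Fintype.card ι) := by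
  have h := sum_pow_mul_le_boxSum (fun x => if x ∈ E then (1 : ℝ) else 0) fun _ => by
    positivity
  simp only [sum_boole, boxSum, prod_boole, mem_univ, true_implies, filter_mem_eq_inter,
    univ_inter] at h
  exact h

lemma card_not_injective_mul_le {κ : Type*} [Fintype κ] [DecidableEq κ] :
    #(univ.filter fun g : κ → α => ¬ Injective g) * Fintype.card α ≤
      Fintype.card κ ^ 2 * Fintype.card α ^ Fintype.card κ := by
  set collide : κ × κ → Finset (κ → α) := fun pq => univ.filter fun g => g pq.1 = g pq.2
  have hcover :
      univ.filter (fun g : κ → α => ¬ Injective g) ⊆ univ.offDiag.biUnion collide := by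
    intro g hg
    obtain ⟨p, q, hpq, hne⟩ := Function.not_injective_iff.mp (mem_filter.mp hg).2
    exact mem_biUnion.mpr ⟨(p, q), by simpa using hne, by simpa [collide] using hpq⟩
  -- `(g, a) ↦ update g q a` is injective on `collide (p, q)`, as `g q = g p` is recoverable
  have hcollide : ∀ pq ∈ (univ : Finset κ).offDiag,
      #(collide pq) * Fintype.card α ≤ Fintype.card α ^ Fintype.card κ := by
    rintro ⟨p, q⟩ hpq
    have hpq : p ≠ q := (mem_offDiag.mp hpq).2.2
    calc #(collide (p, q)) * Fintype.card α = #(collide (p, q) ×ˢ (univ : Finset α)) := by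
          rw [card_product, card_univ]
      _ ≤ #(univ : Finset (κ → α)) := card_le_card_of_injOn (fun ga => update ga.1 q ga.2)
          (fun _ _ => mem_coe.mpr (mem_univ _)) ?_
      _ = Fintype.card α ^ Fintype.card κ := by rw [card_univ, Fintype.card_fun]
    rintro ⟨g, a⟩ hg ⟨g', a'⟩ hg' heq
    simp only [coe_product, Set.mem_prod, mem_coe, mem_filter, mem_univ, true_and, and_true,
      collide] at hg hg'
    have ha : a = a' := by simpa using congrFun heq q
    have hp : g p = g' p := by simpa [hpq] using congrFun heq p
    refine Prod.ext (funext fun x => ?_) ha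
    by_cases hx : x = q
    · simpa [hx, ← hg, ← hg'] using hp
    · simpa [hx] using congrFun heq x
  calc #(univ.filter fun g : κ → α => ¬ Injective g) * Fintype.card α
      ≤ (∑ pq ∈ univ.offDiag, #(collide pq)) * Fintype.card α := by
        gcongr; exact (card_le_card hcover).trans card_biUnion_le
    _ ≤ ∑ _pq ∈ (univ : Finset κ).offDiag, Fintype.card α ^ Fintype.card κ := by
        rw [sum_mul]; exact sum_le_sum hcollide
    _ ≤ Fintype.card κ ^ 2 * Fintype.card α ^ Fintype.card κ := by
        rw [sum_const, smul_eq_mul, offDiag_card, card_univ]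
        gcongr
        rw [sq]; exact Nat.sub_le _ _

lemma card_not_injective_uncurry_mul_le :
    #(univ.filter fun h : ι → Fin 2 → α => ¬ Injective (uncurry h)) * (Fintype.card α : ℝ) ≤
      (2 * Fintype.card ι : ℝ) ^ 2 * (Fintype.card α : ℝ) ^ (2 * Fintype.card ι) := by
  have h := card_not_injective_mul_le (α := α) (κ := ι × Fin 2)
  rw [card_equiv (Equiv.curry ι (Fin 2) α) (t := univ.filter fun h => ¬ Injective (uncurry h))
    (by simp)] at h
  simp only [Fintype.card_prod, Fintype.card_fin] at h
  rw [mul_comm 2, mul_comm 2]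
  exact_mod_cast h

lemma le_card_injective_boxes [Nonempty α] (E : Finset (ι → α)) {c : ℝ} (hc : 0 ≤ c)
    (hE : c * (Fintype.card α : ℝ) ^ Fintype.card ι ≤ #E)
    (hα : 2 * (2 * Fintype.card ι : ℝ) ^ 2 ≤ c ^ 2 ^ Fintype.card ι * Fintype.card α) :
    c ^ 2 ^ Fintype.card ι / 2 * (Fintype.card α : ℝ) ^ (2 * Fintype.card ι) ≤
      #((boxes E).filter fun h => Injective (uncurry h)) := by
  set N : ℝ := (Fintype.card α : ℝ)
  set v := Fintype.card ι
  have hN : 0 < N := by simp [N, Fintype.card_pos]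
  have hboxes : c ^ 2 ^ v * N ^ (2 * v) ≤ #(boxes E) := by
    refine le_of_mul_le_mul_right ?_ (by positivity : 0 < N ^ (v * 2 ^ v))
    calc c ^ 2 ^ v * N ^ (2 * v) * N ^ (v * 2 ^ v)
        = (c * N ^ v) ^ 2 ^ v * N ^ (2 * v) := by ring
      _ ≤ (#E : ℝ) ^ 2 ^ v * N ^ (2 * v) := by gcongr
      _ ≤ #(boxes E) * N ^ (v * 2 ^ v) := card_pow_mul_le_card_boxes E
  have hsplit : (#(boxes E) : ℝ) ≤ #((boxes E).filter fun h => Injective (uncurry h)) +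
      #(univ.filter fun h : ι → Fin 2 → α => ¬ Injective (uncurry h)) := by
    rw [← card_filter_add_card_filter_not (s := boxes E) fun h => Injective (uncurry h)]
    push_cast
    gcongr
    exact subset_univ _
  have hbad := card_not_injective_uncurry_mul_le (ι := ι) (α := α)
  have hmargin := mul_le_mul_of_nonneg_right hα (by positivity : 0 ≤ N ^ (2 * v))
  refine le_of_mul_le_mul_right ?_ hN
  nlinarith

end Box

section Blowup

variable {W : Type*} [DecidableEq W]

lemma IsKClause.injOn_fst {k : ℕ} {C : SatClause W} (hC : IsKClause k C) :
    Set.InjOn Prod.fst (C : Set (W × Bool)) :=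
  injOn_of_card_image_eq (hC.2.trans hC.1.symm)

lemma formulaVars_formulaBlowup (b : ℕ) (F : SatFormula W) :
    formulaVars (formulaBlowup b F) = formulaVars F ×ˢ univ := by
  ext ⟨x, j⟩
  simp only [formulaVars, formulaBlowup, clauseBlowup, clauseVars, mem_biUnion, mem_image,
    mem_product, mem_univ, and_true]
  constructor
  · rintro ⟨D, ⟨C, hC, g, -, rfl⟩, l', hl', hlx⟩
    obtain ⟨⟨l, hl⟩, -, rfl⟩ := mem_image.mp hl'
    exact ⟨C, hC, l, hl, congrArg Prod.fst hlx⟩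
  · rintro ⟨C, hC, l, hl, rfl⟩
    exact ⟨_, ⟨C, hC, fun _ _ => j, by simp, rfl⟩, _,
      mem_image.mpr ⟨⟨l, hl⟩, mem_attach _ _, rfl⟩, rfl⟩

lemma exists_eq_image_of_mem_clauseBlowup {b : ℕ} [NeZero b] {C : SatClause W}
    (hC : Set.InjOn Prod.fst (C : Set (W × Bool))) {D : SatClause (W × Fin b)}
    (hD : D ∈ clauseBlowup b C) :
    ∃ s : W → Fin b, D = C.image fun l => ((l.1, s l.1), l.2) := by
  obtain ⟨g, -, rfl⟩ := mem_image.mp hD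
  set t : W × Bool → Fin b := fun l => if hl : l ∈ C then g l hl else 0
  -- each variable of `C` carries a single polarity, which `decide ((x, true) ∈ C)` recovers
  refine ⟨fun x => t (x, decide ((x, true) ∈ C)), ?_⟩
  have hpol : ∀ l ∈ C, (l.1, decide ((l.1, true) ∈ C)) = l := by
    rintro ⟨x, _ | _⟩ hl
    · have : (x, true) ∉ C := fun h => by simpa using hC h hl rfl
      simp [this]
    · simpa using hl
  refine (image_congr fun l _ => ?_).trans
    (image_image.symm.trans (congrArg (image _) attach_image_val))
  simp [hpol l.1 l.2, t]

end Blowup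

section Relabel

variable {W β : Type*} [DecidableEq W] [DecidableEq β]

lemma mapFormula_congr {φ ψ : W → β} {F : SatFormula W}
    (h : ∀ x ∈ formulaVars F, φ x = ψ x) :
    mapFormula φ F = mapFormula ψ F :=
  image_congr fun C hC => image_congr fun l hl =>
    by rw [h l.1 (mem_biUnion.mpr ⟨C, hC, mem_image_of_mem _ hl⟩)]

lemma formulaVars_mapFormula (φ : W → β) (F : SatFormula W) :
    formulaVars (mapFormula φ F) = (formulaVars F).image φ := by
  simp [formulaVars, mapFormula, clauseVars, image_biUnion, biUnion_image, image_image,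
    Function.comp_def]

end Relabel

section Homs

variable {W β : Type*} [DecidableEq W] [Inhabited β]

noncomputable def boxLabel (F : SatFormula W) (h : formulaVars F → Fin 2 → β) :
    W × Fin 2 → β :=
  extend (Prod.map Subtype.val id) (uncurry h) fun _ => default

lemma boxLabel_apply {F : SatFormula W} (h : formulaVars F → Fin 2 → β) {x : W}
    (hx : x ∈ formulaVars F) (j : Fin 2) : boxLabel F h (x, j) = h ⟨x, hx⟩ j :=
  (Subtype.val_injective.prodMap injective_id).extend_apply _ _ (⟨x, hx⟩, j)

variable [DecidableEq β]

lemma isCopyOf_mapFormula_boxLabel {F : SatFormula W} {h : formulaVars F → Fin 2 → β}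
    (hinj : Injective (uncurry h)) :
    IsCopyOf (formulaBlowup 2 F) (mapFormula (boxLabel F h) (formulaBlowup 2 F)) := by
  refine ⟨boxLabel F h, ?_, rfl⟩
  rw [formulaVars_formulaBlowup]
  rintro ⟨x, j⟩ hx ⟨y, j'⟩ hy hxy
  simp only [coe_product, Set.mem_prod, mem_coe, coe_univ, Set.mem_univ, and_true] at hx hy
  rw [boxLabel_apply h hx, boxLabel_apply h hy] at hxy
  simpa using hinj (a₁ := (⟨x, hx⟩, j)) (a₂ := (⟨y, hy⟩, j')) hxy

variable [Fintype β]

noncomputable def formulaHoms (F : SatFormula W) (G : SatFormula β) :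
    Finset (formulaVars F → β) :=
  univ.filter fun e => mapFormula (extend Subtype.val e fun _ => default) F ⊆ G

lemma copyCount_le_card_formulaHoms (F : SatFormula W) (G : SatFormula β) :
    copyCount F G ≤ #(formulaHoms F G) := by
  have hcopies : {G' | G' ⊆ G ∧ IsCopyOf F G'} ⊆
      (fun e => mapFormula (extend Subtype.val e fun _ => default) F) ''
        (formulaHoms F G : Set (formulaVars F → β)) := by
    rintro _ ⟨hG, φ, -, rfl⟩
    have hφ : mapFormula (extend Subtype.val (φ ∘ Subtype.val) fun _ => default) F =
        mapFormula φ F :=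
      mapFormula_congr fun x hx => Subtype.val_injective.extend_apply _ _ ⟨x, hx⟩
    exact ⟨φ ∘ Subtype.val, by simpa [formulaHoms, hφ] using hG, hφ⟩
  calc copyCount F G ≤ _ := Set.ncard_le_ncard hcopies (Set.toFinite _)
    _ ≤ (formulaHoms F G : Set (formulaVars F → β)).ncard :=
        Set.ncard_image_le (Set.toFinite _)
    _ = #(formulaHoms F G) := Set.ncard_coe_finset _

lemma mapFormula_boxLabel_subset {F : SatFormula W} {G : SatFormula β}
    (hF : ∀ C ∈ F, Set.InjOn Prod.fst (C : Set (W × Bool)))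
    {h : formulaVars F → Fin 2 → β} (hh : h ∈ boxes (formulaHoms F G)) :
    mapFormula (boxLabel F h) (formulaBlowup 2 F) ⊆ G := by
  intro _ hD'
  obtain ⟨D, hD, rfl⟩ := mem_image.mp hD'
  obtain ⟨C, hC, hDC⟩ := mem_biUnion.mp hD
  obtain ⟨s, rfl⟩ := exists_eq_image_of_mem_clauseBlowup (hF C hC) hDC
  have hhom := (mem_filter.mp ((mem_filter.mp hh).2 fun x => s x)).2
  refine hhom (mem_image.mpr ⟨C, hC, ?_⟩)
  rw [image_image]
  refine image_congr fun l hl => ?_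
  have hx : l.1 ∈ formulaVars F := mem_biUnion.mpr ⟨C, hC, mem_image_of_mem _ hl⟩
  simp [boxLabel_apply h hx, Subtype.val_injective.extend_apply _ _ ⟨l.1, hx⟩]

lemma card_injective_boxes_formulaHoms_le {F : SatFormula W} (G : SatFormula β)
    (hF : ∀ C ∈ F, Set.InjOn Prod.fst (C : Set (W × Bool))) :
    #((boxes (formulaHoms F G)).filter fun h => Injective (uncurry h)) ≤
      (2 * #(formulaVars F)) ^ (2 * #(formulaVars F)) * copyCount (formulaBlowup 2 F) G := by
  set S := (boxes (formulaHoms F G)).filter fun h => Injective (uncurry h)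
  set Γ : (formulaVars F → Fin 2 → β) → SatFormula β :=
    fun h => mapFormula (boxLabel F h) (formulaBlowup 2 F)
  have hvars : ∀ h, formulaVars (Γ h) = (formulaVars F ×ˢ univ).image (boxLabel F h) := by
    intro h
    simp only [Γ, formulaVars_mapFormula, formulaVars_formulaBlowup]
  -- a box in the fibre over `Γ h₀` maps the `2 v` variables of `F[2]` into those of `Γ h₀`
  have hfiber : ∀ G' ∈ S.image Γ, #(S.filter (Γ · = G')) ≤
      (2 * #(formulaVars F)) ^ (2 * #(formulaVars F)) := by
    intro _ hG'
    obtain ⟨h₀, -, rfl⟩ := mem_image.mp hG'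
    calc #(S.filter (Γ · = Γ h₀))
        ≤ #(Fintype.piFinset fun _ : formulaVars F × Fin 2 => formulaVars (Γ h₀)) := by
          refine card_le_card_of_injOn uncurry (fun h hh => ?_) uncurry_injective.injOn
          rw [mem_coe, Fintype.mem_piFinset, ← (mem_filter.mp hh).2, hvars]
          exact fun p => mem_image.mpr ⟨(p.1.1, p.2), by simp, boxLabel_apply h p.1.2 p.2⟩
      _ = #(formulaVars (Γ h₀)) ^ (2 * #(formulaVars F)) := by
          simp [Fintype.card_piFinset, mul_comm]
      _ ≤ (2 * #(formulaVars F)) ^ (2 * #(formulaVars F)) := by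
          gcongr
          rw [hvars]
          exact card_image_le.trans (by simp [mul_comm])
  calc #S ≤ _ * #(S.image Γ) := card_le_mul_card_image S _ hfiber
    _ ≤ _ := by
      gcongr
      rw [← Set.ncard_coe_finset]
      refine Set.ncard_le_ncard (fun _ hG' => ?_) (Set.toFinite _)
      obtain ⟨h, hh, rfl⟩ := mem_image.mp hG'
      exact ⟨mapFormula_boxLabel_subset hF (mem_filter.mp hh).1,
        isCopyOf_mapFormula_boxLabel (mem_filter.mp hh).2⟩

end Homs

theorem blowup_supersaturation_general (k : ℕ) {W : Type*} [DecidableEq W]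
    (ε : ℝ) (hε : 0 < ε) (F : SatFormula W) (hF : IsKFormula k F) :
    ∃ δ : ℝ, 0 < δ ∧ ∃ n₀ : ℕ, ∀ n > n₀, ∀ G : SatFormula (Fin n), IsKFormula k G →
      ε * n ^ (formulaVars F).card ≤ (copyCount F G : ℝ) →
      δ * n ^ (2 * (formulaVars F).card) ≤ (copyCount (formulaBlowup 2 F) G : ℝ) := by
  set v := #(formulaVars F)
  have hM : (0 : ℝ) < ((2 * v) ^ (2 * v) : ℕ) := Nat.cast_pos.mpr Nat.pow_self_pos
  refine ⟨ε ^ 2 ^ v / 2 / ((2 * v) ^ (2 * v) : ℕ), by positivity,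
    ⌈2 * (2 * v : ℝ) ^ 2 / ε ^ 2 ^ v⌉₊, fun n hn G _ hcopies => ?_⟩
  have : NeZero n := ⟨by omega⟩
  have hn : 2 * (2 * v : ℝ) ^ 2 ≤ ε ^ 2 ^ v * n := by
    have := (Nat.le_ceil _).trans (Nat.cast_le.mpr hn.le : (_ : ℝ) ≤ n)
    rwa [div_le_iff₀' (by positivity)] at this
  have hboxes := le_card_injective_boxes (formulaHoms F G) hε.le
    (by simpa using hcopies.trans (by exact_mod_cast copyCount_le_card_formulaHoms F G))
    (by simpa using hn)
  have hcopies₂ : (#((boxes (formulaHoms F G)).filter fun h => Injective (uncurry h)) : ℝ) ≤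
      ((2 * v) ^ (2 * v) : ℕ) * copyCount (formulaBlowup 2 F) G := by
    exact_mod_cast card_injective_boxes_formulaHoms_le G fun C hC => (hF C hC).injOn_fst
  simp only [Fintype.card_coe, Fintype.card_fin] at hboxes
  rw [div_mul_eq_mul_div, div_le_iff₀' hM]
  exact hboxes.trans hcopies₂

/-- Fix `k ≥ 2`. For every `ε > 0` and every `k`-SAT formula `F`, there
exist `δ > 0` and `n₀` such that for all `n > n₀`: if a `k`-SAT formula `G` on `n` variables
contains at least `ε·n^{v(F)}` copies of `F`, then `G` contains at least `δ·n^{2·v(F)}`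
copies of the 2-blowup `F[2]`. -/
theorem blowup_supersaturation (k : ℕ) (hk : 2 ≤ k) {W : Type*} [DecidableEq W]
    (ε : ℝ) (hε : 0 < ε) (F : SatFormula W) (hF : IsKFormula k F) :
    ∃ δ : ℝ, 0 < δ ∧ ∃ n₀ : ℕ, ∀ n > n₀, ∀ G : SatFormula (Fin n), IsKFormula k G →
      ε * n ^ (formulaVars F).card ≤ (copyCount F G : ℝ) →
      δ * n ^ (2 * (formulaVars F).card) ≤ (copyCount (formulaBlowup 2 F) G : ℝ) :=
  blowup_supersaturation_general k ε hε F hF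
end

section
/- Fix an integer k ≥ 2. Let G be a k-SAT formula consisting of exactly two distinct clauses that use the same set of k variables. Then the 2-blowup G[2] is not minimal. -/
section Aux

variable {V : Type*} [DecidableEq V]

/-- The blowup clause of `C` given by choosing duplicate `h x` for each variable `x`. -/
def blowClause (h : V → Fin 2) (C : SatClause V) : SatClause (V × Fin 2) :=
  C.image (fun l => ((l.1, h l.1), l.2))

lemma blowClause_mem (h : V → Fin 2) (C : SatClause V) :
    blowClause h C ∈ clauseBlowup 2 C := by
  unfold clauseBlowup
  rw [Finset.mem_image]
  refine ⟨fun l _ => h l.1, by simp [Finset.mem_pi], ?_⟩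
  ext l
  simp [blowClause, Finset.mem_image]

lemma mem_blowClause {h : V → Fin 2} {C : SatClause V} {l : (V × Fin 2) × Bool} :
    l ∈ blowClause h C ↔ ∃ x b, (x, b) ∈ C ∧ l = ((x, h x), b) := by
  simp only [blowClause, Finset.mem_image, Prod.exists]
  aesop

lemma kclause_functional {k : ℕ} {C : SatClause V} (hC : IsKClause k C)
    {x : V} {b b' : Bool} (hb : (x, b) ∈ C) (hb' : (x, b') ∈ C) : b = b' := by
  have hinj : Set.InjOn Prod.fst (C : Set (V × Bool)) := by
    apply Finset.injOn_of_card_image_eq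
    rw [show C.image Prod.fst = clauseVars C from rfl, hC.2, hC.1]
  have := hinj hb hb' rfl
  exact (Prod.mk.injEq ..).mp this |>.2

lemma mem_clauseVars {C : SatClause V} {x : V} :
    x ∈ clauseVars C ↔ ∃ b, (x, b) ∈ C := by
  simp only [clauseVars, Finset.mem_image, Prod.exists]
  aesop

end Aux
/-- Fix `k ≥ 2`. The 2-blowup of a formula consisting of two distinct
clauses on the same set of `k` variables is not minimal. -/
theorem pair_blowup_nonminimal (k : ℕ) (hk : 2 ≤ k) {V : Type*} [DecidableEq V]
    (C₁ C₂ : SatClause V) (h₁ : IsKClause k C₁) (h₂ : IsKClause k C₂) (hne : C₁ ≠ C₂)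
    (hvars : clauseVars C₁ = clauseVars C₂) :
    ¬ MinimalFormula (formulaBlowup 2 ({C₁, C₂} : SatFormula V)) := by
  intro hmin
  set G := ({C₁, C₂} : SatFormula V) with hG
  have hC₁G : C₁ ∈ G := Finset.mem_insert_self _ _
  have hC₂G : C₂ ∈ G := by simp [hG]
  -- the base blowup clause of C₁, all duplicates 0
  set D : SatClause (V × Fin 2) := blowClause (fun _ => 0) C₁ with hD
  have hDmem : D ∈ formulaBlowup 2 G :=
    Finset.mem_biUnion.mpr ⟨C₁, hC₁G, blowClause_mem _ _⟩
  obtain ⟨w, hwD, huniq⟩ := hmin D hDmem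
  -- step 3 : w (x,0) = b for literals of C₁
  have step3 : ∀ x b, (x, b) ∈ C₁ → w (x, 0) = b := by
    intro x b hxb
    exact hwD ((x, 0), b) (mem_blowClause.mpr ⟨x, b, hxb, rfl⟩)
  -- step 4 : w (x,1) ≠ b for literals of C₁
  have step4 : ∀ x b, (x, b) ∈ C₁ → w (x, 1) ≠ b := by
    intro x b hxb hw1
    set h' : V → Fin 2 := fun y => if y = x then 1 else 0 with hh'
    have hsat : SatisfiesClause w (blowClause h' C₁) := by
      intro l hl
      obtain ⟨y, b', hyb', rfl⟩ := mem_blowClause.mp hl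
      by_cases hyx : y = x
      · subst hyx
        have hb' : b' = b := kclause_functional h₁ hyb' hxb
        simp [hh', hb', hw1]
      · simp only [hh', if_neg hyx]
        exact step3 y b' hyb'
    have heq : blowClause h' C₁ = D :=
      huniq _ (Finset.mem_biUnion.mpr ⟨C₁, hC₁G, blowClause_mem _ _⟩) hsat
    have hmem1 : ((x, (1 : Fin 2)), b) ∈ blowClause h' C₁ := by
      refine mem_blowClause.mpr ⟨x, b, hxb, ?_⟩
      simp [hh']
    rw [heq] at hmem1
    obtain ⟨y, b₁, _, hyb⟩ := mem_blowClause.mp hmem1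
    simp at hyb
  -- step 6 : there is a variable where the polarities differ
  have step6 : ∃ x b, (x, b) ∈ C₂ ∧ (x, !b) ∈ C₁ := by
    by_contra hcon
    push_neg at hcon
    apply hne
    refine (Finset.eq_of_subset_of_card_le ?_ (by rw [h₁.1, h₂.1])).symm
    intro l hl
    obtain ⟨x, b⟩ := l
    have hx : x ∈ clauseVars C₁ := by
      rw [hvars]; exact mem_clauseVars.mpr ⟨b, hl⟩
    obtain ⟨b₁, hb₁⟩ := mem_clauseVars.mp hx
    have : b₁ = b := by
      by_contra hbb
      have : b₁ = !b := by cases b <;> cases b₁ <;> simp_all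
      exact hcon x b hl (this ▸ hb₁)
    exact this ▸ hb₁
  -- the satisfied blowup of C₂
  set h₂f : V → Fin 2 := fun y => if (y, w (y, 0)) ∈ C₂ then 0 else 1 with hh₂
  have hsat₂ : SatisfiesClause w (blowClause h₂f C₂) := by
    intro l hl
    obtain ⟨y, b', hyb', rfl⟩ := mem_blowClause.mp hl
    by_cases hc : (y, w (y, 0)) ∈ C₂
    · have : w (y, 0) = b' := kclause_functional h₂ hc hyb'
      simp only [hh₂, if_pos hc]
      exact this
    · simp only [hh₂, if_neg hc]
      have hy1 : y ∈ clauseVars C₁ := by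
        rw [hvars]; exact mem_clauseVars.mpr ⟨b', hyb'⟩
      obtain ⟨b₁, hb₁⟩ := mem_clauseVars.mp hy1
      have hw0 : w (y, 0) = b₁ := step3 y b₁ hb₁
      have hne' : b₁ ≠ b' := by
        intro hbb; exact hc (by rw [hw0, hbb]; exact hyb')
      have hw1 : w (y, 1) ≠ b₁ := step4 y b₁ hb₁
      cases b₁ <;> cases b' <;> simp_all
  have heq₂ : blowClause h₂f C₂ = D :=
    huniq _ (Finset.mem_biUnion.mpr ⟨C₂, hC₂G, blowClause_mem _ _⟩) hsat₂
  obtain ⟨x, b, hxC₂, hxC₁⟩ := step6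
  have hmem2 : ((x, h₂f x), b) ∈ D := by
    rw [← heq₂]; exact mem_blowClause.mpr ⟨x, b, hxC₂, rfl⟩
  obtain ⟨y, b₁, hyb₁, hyeq⟩ := mem_blowClause.mp hmem2
  have hy : y = x ∧ b₁ = b := by
    simpa using congrArg (fun p => (p.1.1, p.2)) hyeq.symm
  obtain ⟨rfl, rfl⟩ := hy
  have := kclause_functional h₁ hyb₁ hxC₁
  simp at this
end

section
/- Fix an integer k ≥ 2. Let G be a k-SAT formula consisting of exactly two distinct clauses that use the same set of k variables and whose polarity assignments differ on at least two variables. Then the 2-blowup G[2] contains a subformula that is simple and not minimal. -/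
section Aux
variable {V : Type*} [DecidableEq V]

def swapCl (T : Finset V) (C : SatClause V) : SatClause (V × Fin 2) :=
  C.image (fun l => ((l.1, if l.1 ∈ T then (1 : Fin 2) else 0), l.2))

lemma swapCl_mem_blowup (T : Finset V) (C : SatClause V) :
    swapCl T C ∈ clauseBlowup 2 C := by
  classical
  rw [clauseBlowup, Finset.mem_image]
  refine ⟨fun l _ => if l.1 ∈ T then (1 : Fin 2) else 0, ?_, ?_⟩
  · simp [Finset.mem_pi]
  · ext x
    simp only [swapCl, Finset.mem_image, Finset.mem_attach, true_and, Subtype.exists,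
      Finset.mem_image]
    constructor
    · rintro ⟨l, hl, rfl⟩; exact ⟨l, hl, rfl⟩
    · rintro ⟨l, hl, rfl⟩; exact ⟨l, hl, rfl⟩

lemma clauseVars_swapCl (T : Finset V) (C : SatClause V) :
    clauseVars (swapCl T C)
      = (clauseVars C).image (fun v => (v, if v ∈ T then (1 : Fin 2) else 0)) := by
  unfold clauseVars swapCl
  rw [Finset.image_image, Finset.image_image]
  rfl

lemma vars_eq_of_swap_eq {T T' : Finset V} {C C' : SatClause V}
    (h : clauseVars C = clauseVars C')
    (heq : clauseVars (swapCl T C) = clauseVars (swapCl T' C')) :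
    ∀ v ∈ clauseVars C, (v ∈ T ↔ v ∈ T') := by
  intro v hv
  rw [clauseVars_swapCl, clauseVars_swapCl, ← h] at heq
  have hm : (v, if v ∈ T then (1 : Fin 2) else 0)
      ∈ (clauseVars C).image (fun v => (v, if v ∈ T' then (1 : Fin 2) else 0)) := by
    rw [← heq]; exact Finset.mem_image_of_mem _ hv
  rw [Finset.mem_image] at hm
  obtain ⟨u, hu, he⟩ := hm
  have h1 : u = v := congrArg Prod.fst he
  subst h1
  have h2 := congrArg Prod.snd he
  by_cases hT : u ∈ T <;> by_cases hT' : u ∈ T' <;> simp_all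

lemma swapCl_congr {T T' : Finset V} (C : SatClause V)
    (h : ∀ v ∈ clauseVars C, (v ∈ T ↔ v ∈ T')) : swapCl T C = swapCl T' C := by
  unfold swapCl
  apply Finset.image_congr
  intro l hl
  have := h l.1 (Finset.mem_image_of_mem _ hl)
  simp only []
  by_cases hT : l.1 ∈ T <;> simp_all

lemma injOn_fst {k : ℕ} {C : SatClause V} (h : IsKClause k C) :
    ∀ l ∈ C, ∀ m ∈ C, l.1 = m.1 → l = m := by
  obtain ⟨hc, hv⟩ := h
  have hcc : (C.image Prod.fst).card = C.card := by
    rw [clauseVars] at hv; rw [hv, hc]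
  exact fun l hl m hm he =>
    Finset.card_image_iff.mp hcc (Finset.mem_coe.mpr hl) (Finset.mem_coe.mpr hm) he

end Aux
/-- Fix `k ≥ 2`. If two distinct clauses use the same set of `k` variables
and their polarity assignments differ on at least two variables, then the 2-blowup of the
pair contains a simple non-minimal subformula. -/
theorem pair_blowup_simple_nonminimal (k : ℕ) (hk : 2 ≤ k) {V : Type*} [DecidableEq V]
    (C₁ C₂ : SatClause V) (h₁ : IsKClause k C₁) (h₂ : IsKClause k C₂) (hne : C₁ ≠ C₂)
    (hvars : clauseVars C₁ = clauseVars C₂)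
    (hdiff : 2 ≤ ((C₁ \ C₂).image Prod.fst).card) :
    ∃ H ⊆ formulaBlowup 2 ({C₁, C₂} : SatFormula V),
      SimpleFormula H ∧ ¬ MinimalFormula H := by
  classical
  set D : Finset V := (C₁ \ C₂).image Prod.fst with hD
  have hDS : D ⊆ clauseVars C₁ := by
    intro v hv
    rw [hD, Finset.mem_image] at hv
    obtain ⟨l, hl, rfl⟩ := hv
    exact Finset.mem_image_of_mem _ (Finset.mem_sdiff.1 hl).1
  obtain ⟨d₁, hd₁, d₂, hd₂, hdd⟩ := Finset.one_lt_card.1 hdiff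
  have inj1 := injOn_fst h₁
  have inj2 := injOn_fst h₂
  set H : SatFormula (V × Fin 2) :=
    insert (swapCl ∅ C₁) (insert (swapCl D C₂) (D.image fun d => swapCl {d} C₁)) with hH
  have hmem : ∀ X ∈ H, (X = swapCl ∅ C₁ ∨ X = swapCl D C₂) ∨ ∃ d ∈ D, X = swapCl {d} C₁ := by
    intro X hX
    simp only [hH, Finset.mem_insert, Finset.mem_image] at hX
    rcases hX with h | h | ⟨d, hd, h⟩
    · exact Or.inl (Or.inl h)
    · exact Or.inl (Or.inr h)
    · exact Or.inr ⟨d, hd, h.symm⟩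
  -- "pattern" of each member as a Finset T with base clause
  have hbase : ∀ X ∈ H, ∃ T : Finset V, ∃ C : SatClause V,
      (C = C₁ ∨ C = C₂) ∧ X = swapCl T C ∧
      ((T = ∅ ∧ C = C₁) ∨ (T = D ∧ C = C₂) ∨ (∃ d ∈ D, T = {d} ∧ C = C₁)) := by
    intro X hX
    rcases hmem X hX with (h | h) | ⟨d, hd, h⟩
    · exact ⟨∅, C₁, Or.inl rfl, h, Or.inl ⟨rfl, rfl⟩⟩
    · exact ⟨D, C₂, Or.inr rfl, h, Or.inr (Or.inl ⟨rfl, rfl⟩)⟩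
    · exact ⟨{d}, C₁, Or.inl rfl, h, Or.inr (Or.inr ⟨d, hd, rfl, rfl⟩)⟩
  refine ⟨H, ?_, ?_, ?_⟩
  · -- subset of the blowup
    intro X hX
    rw [formulaBlowup, Finset.mem_biUnion]
    rcases hmem X hX with (h | h) | ⟨d, _, h⟩
    · exact ⟨C₁, by simp, h ▸ swapCl_mem_blowup _ _⟩
    · exact ⟨C₂, by simp, h ▸ swapCl_mem_blowup _ _⟩
    · exact ⟨C₁, by simp, h ▸ swapCl_mem_blowup _ _⟩
  · -- simple
    intro X hX Y hY hXY
    obtain ⟨T, C, hC, rfl, hT⟩ := hbase X hX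
    obtain ⟨T', C', hC', rfl, hT'⟩ := hbase Y hY
    have hCv : clauseVars C = clauseVars C₁ := by
      rcases hC with rfl | rfl
      · rfl
      · exact hvars.symm
    have hC'v : clauseVars C = clauseVars C' := by
      rcases hC' with rfl | rfl
      · rw [hCv]
      · rw [hCv, hvars]
    have hpat := vars_eq_of_swap_eq hC'v hXY
    rw [hCv] at hpat
    -- now case on patterns
    rcases hT with ⟨rfl, rfl⟩ | ⟨rfl, rfl⟩ | ⟨d, hd, rfl, rfl⟩ <;>
      rcases hT' with ⟨rfl, rfl⟩ | ⟨rfl, rfl⟩ | ⟨d', hd', rfl, rfl⟩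
    · rfl
    · exact absurd ((hpat d₁ (hDS hd₁)).2 hd₁) (by simp)
    · exact absurd ((hpat d' (hDS hd')).2 (Finset.mem_singleton_self d')) (by simp)
    · exact absurd ((hpat d₁ (hDS hd₁)).1 hd₁) (by simp)
    · rfl
    · -- T = D vs {d'} : pick element of D different from d'
      rcases eq_or_ne d₁ d' with rfl | hne'
      · have := (hpat d₂ (hDS hd₂)).1 hd₂
        rw [Finset.mem_singleton] at this
        exact absurd this (Ne.symm hdd)
      · have := (hpat d₁ (hDS hd₁)).1 hd₁
        rw [Finset.mem_singleton] at this
        exact absurd this hne'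
    · exact absurd ((hpat d (hDS hd)).1 (Finset.mem_singleton_self d)) (by simp)
    · rcases eq_or_ne d₁ d with rfl | hne'
      · have := (hpat d₂ (hDS hd₂)).2 hd₂
        rw [Finset.mem_singleton] at this
        exact absurd this (Ne.symm hdd)
      · have := (hpat d₁ (hDS hd₁)).2 hd₁
        rw [Finset.mem_singleton] at this
        exact absurd this hne'
    · have : d = d' := by
        have := (hpat d (hDS hd)).1 (Finset.mem_singleton_self d)
        rwa [Finset.mem_singleton] at this
      rw [this]
  · -- not minimal
    intro hmin
    obtain ⟨w, hwA, hw⟩ := hmin (swapCl ∅ C₁) (by simp [hH])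
    have hw0 : ∀ l ∈ C₁, w (l.1, 0) = l.2 := by
      intro l hl
      exact hwA ((l.1, 0), l.2) (by
        simp only [swapCl, Finset.mem_image]
        exact ⟨l, hl, by simp⟩)
    have hnotA : ∀ T : Finset V, ∀ C : SatClause V, ∀ v ∈ T, v ∈ clauseVars C →
        swapCl T C ≠ swapCl ∅ C₁ := by
      intro T C v hvT hvC heq
      rw [clauseVars, Finset.mem_image] at hvC
      obtain ⟨m, hm, rfl⟩ := hvC
      have hmem1 : ((m.1, (1 : Fin 2)), m.2) ∈ swapCl T C := by
        simp only [swapCl, Finset.mem_image]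
        exact ⟨m, hm, by simp [hvT]⟩
      rw [heq] at hmem1
      simp only [swapCl, Finset.mem_image] at hmem1
      obtain ⟨a, _, ha⟩ := hmem1
      simp only [Finset.notMem_empty, if_neg] at ha
      have := congrArg (fun p => p.1.2) ha
      simp at this
    by_cases hcase : ∃ l ∈ C₁, l.1 ∈ D ∧ w (l.1, 1) = l.2
    · obtain ⟨l, hl, hlD, hwl⟩ := hcase
      have hBH : swapCl {l.1} C₁ ∈ H := by
        simp only [hH, Finset.mem_insert, Finset.mem_image]
        exact Or.inr (Or.inr ⟨l.1, hlD, rfl⟩)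
      have hsat : SatisfiesClause w (swapCl {l.1} C₁) := by
        intro m hm
        simp only [swapCl, Finset.mem_image] at hm
        obtain ⟨a, ha, rfl⟩ := hm
        by_cases h : a.1 = l.1
        · have := inj1 a ha l hl h
          subst this
          simp [hwl]
        · simp [h, hw0 a ha]
      exact hnotA {l.1} C₁ l.1 (Finset.mem_singleton_self l.1)
        (Finset.mem_image_of_mem _ hl) (hw _ hBH hsat)
    · push_neg at hcase
      have hBH : swapCl D C₂ ∈ H := by simp [hH]
      have hsat : SatisfiesClause w (swapCl D C₂) := by
        intro m hm
        simp only [swapCl, Finset.mem_image] at hm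
        obtain ⟨a, ha, rfl⟩ := hm
        by_cases h : a.1 ∈ D
        · simp only [h, if_true]
          rw [hD, Finset.mem_image] at h
          obtain ⟨l, hl, hla⟩ := h
          rw [Finset.mem_sdiff] at hl
          have hne2 : l.2 ≠ a.2 := by
            intro he
            exact hl.2 (by rw [show l = a from Prod.ext hla he]; exact ha)
          have hwl := hcase l hl.1 (by rw [hD]; exact Finset.mem_image_of_mem _ (Finset.mem_sdiff.2 hl))
          rw [hla] at hwl
          cases hb : w (a.1, 1)
          · cases hl2 : l.2
            · exact absurd (hb.trans hl2.symm) hwl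
            · cases ha2 : a.2
              · rfl
              · exact absurd (hl2.trans ha2.symm) hne2
          · cases hl2 : l.2
            · cases ha2 : a.2
              · exact absurd (hl2.trans ha2.symm) hne2
              · rfl
            · exact absurd (hb.trans hl2.symm) hwl
        · simp only [h, if_false]
          have hva : a.1 ∈ clauseVars C₁ := by
            rw [hvars]; exact Finset.mem_image_of_mem _ ha
          rw [clauseVars, Finset.mem_image] at hva
          obtain ⟨l, hl, hla⟩ := hva
          have hl2 : l.2 = a.2 := by
            by_contra hc
            have hlC2 : l ∉ C₂ := by
              intro hlC2
              exact hc (congrArg Prod.snd (inj2 l hlC2 a ha hla))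
            exact h (by rw [hD, ← hla]; exact Finset.mem_image_of_mem _ (Finset.mem_sdiff.2 ⟨hl, hlC2⟩))
          rw [← hla, ← hl2]
          exact hw0 l hl
      exact hnotA D C₂ d₁ hd₁ (by rw [← hvars]; exact hDS hd₁) (hw _ hBH hsat)
end
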